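/- arXiv:1306.1641 — 9 statements merged into one kernel-verified Lean document; each statement's English description precedes it below -/
import Mathlib

section
/- (Proposition 2.5) For every normalized divisive weight vector χ, the maps g_0, g_1, …, g_n are characteristic maps of a finite CW-structure on ℙ(χ) containing exactly n+1 cells, one of each even dimension 0, 2, …, 2n: for 1 ≤ i ≤ n the restriction of g_i to the open disc {w ∈ ℂ^i : |w| < 1} is a homeomorphism onto the open cell {[z] ∈ ℙ(χ) : z_0 = ⋯ = z_{n−i−1} = 0, z_{n−i} ≠ 0}, g_i maps the boundary sphere {w : |w| = 1} into the union {[z] : z_0 = ⋯ = z_{n−i} = 0} of all lower-dimensional cells, and the zero cell is {[0,…,0,1]}. -/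
noncomputable section

open Complex

/-- The unit sphere `S^{2n+1} ⊆ ℂ^{n+1}`. -/
abbrev Sph (n : ℕ) := {z : Fin (n + 1) → ℂ // ∑ j, Complex.normSq (z j) = 1}

/-- The relation identifying points of `S^{2n+1}` in the same orbit of the weighted
circle `T(χ) = {(t^{χ₀},…,t^{χₙ}) : |t| = 1}`, acting coordinatewise. -/
def WPrel (n : ℕ) (χ : Fin (n + 1) → ℕ) (z z' : Sph n) : Prop :=
  ∃ t : ℂ, ‖t‖ = 1 ∧ ∀ j, z'.1 j = t ^ (χ j) * z.1 j

/-- The weighted projective space `ℙ(χ) = S^{2n+1}/T(χ)` with the quotient topology. -/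
abbrev WPS (n : ℕ) (χ : Fin (n + 1) → ℕ) := Quot (WPrel n χ)

/-- The vector `(0,…,0,√(1−|w|²),w₁,…,wᵢ) ∈ ℂ^{n+1}` (the square root in coordinate
`n − i`). -/
def zvec (n i : ℕ) (hi : i ≤ n) (w : Fin i → ℂ) : Fin (n + 1) → ℂ := fun j =>
  Fin.append
    (Fin.append (fun _ : Fin (n - i) => (0 : ℂ))
      (fun _ : Fin 1 => ((Real.sqrt (1 - ∑ k, Complex.normSq (w k)) : ℝ) : ℂ)))
    w (Fin.cast (by omega) j)

lemma zvec_mem (n i : ℕ) (hi : i ≤ n) (w : Fin i → ℂ)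
    (hw : ∑ k, Complex.normSq (w k) ≤ 1) :
    ∑ j, Complex.normSq (zvec n i hi w j) = 1 := by
  classical
  set c : ℂ := ((Real.sqrt (1 - ∑ k, Complex.normSq (w k)) : ℝ) : ℂ) with hc
  set F : Fin (n - i + 1 + i) → ℂ :=
    Fin.append (Fin.append (fun _ : Fin (n - i) => (0 : ℂ)) (fun _ : Fin 1 => c)) w with hF
  have key : ∑ j : Fin (n + 1), Complex.normSq (zvec n i hi w j)
      = ∑ j : Fin (n - i + 1 + i), Complex.normSq (F j) :=
    Fintype.sum_equiv (finCongr (by omega)) _ _ (fun j => rfl)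
  rw [key, Fin.sum_univ_add]
  have h1 : ∑ j : Fin (n - i + 1), Complex.normSq (F (Fin.castAdd i j))
      = 1 - ∑ k, Complex.normSq (w k) := by
    have : ∀ j : Fin (n - i + 1), F (Fin.castAdd i j)
        = Fin.append (fun _ : Fin (n - i) => (0 : ℂ)) (fun _ : Fin 1 => c) j := fun j => by
      rw [hF, Fin.append_left]
    simp only [this]
    rw [Fin.sum_univ_add]
    simp only [Fin.append_left, Fin.append_right]
    have h0 : 0 ≤ 1 - ∑ k, Complex.normSq (w k) := by linarith
    simp [hc, Complex.normSq_ofReal, Real.mul_self_sqrt h0]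
  have h2 : ∀ j : Fin i, F (Fin.natAdd (n - i + 1) j) = w j := fun j => by
    rw [hF, Fin.append_right]
  simp only [h2]
  rw [h1]
  ring

/-- The characteristic map `gᵢ : D^{2i} → ℙ(χ)`,
`gᵢ(w) = [0,…,0,√(1−|w|²),w₁,…,wᵢ]`, defined on the closed unit disc. -/
def gmap (n : ℕ) (χ : Fin (n + 1) → ℕ) (i : ℕ) (hi : i ≤ n)
    (w : {w : Fin i → ℂ // ∑ k, Complex.normSq (w k) ≤ 1}) : WPS n χ :=
  Quot.mk _ ⟨zvec n i hi w.1, zvec_mem n i hi w.1 w.2⟩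

/-- The open `2i`-cell `{[z] ∈ ℙ(χ) : z₀ = ⋯ = z_{n−i−1} = 0, z_{n−i} ≠ 0}`. -/
def cell (n : ℕ) (χ : Fin (n + 1) → ℕ) (i : ℕ) : Set (WPS n χ) :=
  {p | ∃ z : Sph n, (∀ j : Fin (n + 1), (j : ℕ) + i < n → z.1 j = 0) ∧
    z.1 ⟨n - i, Nat.lt_succ_of_le (Nat.sub_le n i)⟩ ≠ 0 ∧ p = Quot.mk _ z}

/-- The point `(0,…,0,1) ∈ S^{2n+1}`. -/
def eN (n : ℕ) : Sph n :=
  ⟨fun j => if (j : ℕ) = n then 1 else 0, by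
    have h : ∀ j : Fin (n + 1),
        Complex.normSq (if (j : ℕ) = n then (1 : ℂ) else 0)
          = if j = Fin.last n then 1 else 0 := by
      intro j
      by_cases h : (j : ℕ) = n
      · have : j = Fin.last n := by ext; simpa using h
        simp [h, this]
      · have : j ≠ Fin.last n := fun hj => h (by simp [hj])
        simp [h, this]
    rw [Finset.sum_congr rfl (fun j _ => h j)]
    simp⟩

/-!
A point `[z]` lies in the `2i`-cell exactly when `z_{n-i}` is its first nonzero coordinate, a
condition invariant under `T(χ)`; so the cells partition `ℙ(χ)`. On the `2i`-cell, choosing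
`t` with `t ^ χ_{n-i} = conj z_{n-i} / |z_{n-i}|` moves `z` to a representative with positive
coordinate `n - i`, which is `gᵢ` of its last `i` coordinates. Because `χ_{n-i}` divides all
later weights, those coordinates are continuous `T(χ)`-invariant functions of `z` on the open
saturated set `z_{n-i} ≠ 0`, so they descend to a continuous inverse of `gᵢ` on the cell.
-/

lemma exists_norm_eq_one_pow_eq {u : ℂ} (hu : ‖u‖ = 1) {k : ℕ} (hk : 0 < k) :
    ∃ t : ℂ, ‖t‖ = 1 ∧ t ^ k = u := by
  obtain ⟨t, ht⟩ := IsAlgClosed.exists_pow_nat_eq u hk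
  refine ⟨t, (pow_eq_one_iff_of_nonneg (norm_nonneg t) hk.ne').mp ?_, ht⟩
  rw [← norm_pow, ht, hu]

lemma continuousOn_quot_lift {X Y : Type*} [TopologicalSpace X] [TopologicalSpace Y]
    {r : X → X → Prop} {f : X → Y} (hf : ∀ a b, r a b → f a = f b) {s : Set (Quot r)}
    (hs : IsOpen (Quot.mk r ⁻¹' s)) (hcont : ContinuousOn f (Quot.mk r ⁻¹' s)) :
    ContinuousOn (Quot.lift f hf) s := by
  refine continuousOn_iff'.mpr fun W hW => ⟨Quot.lift f hf ⁻¹' W ∩ s, ?_, by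
    rw [Set.inter_assoc, Set.inter_self]⟩
  rw [← isQuotientMap_quot_mk.isOpen_preimage, Set.preimage_inter, Set.inter_comm]
  exact hcont.isOpen_inter_preimage hs hW

lemma dvd_of_le_of_dvd_succ {n : ℕ} {χ : Fin (n + 1) → ℕ}
    (hdiv : ∀ j : Fin n, χ j.castSucc ∣ χ j.succ) {a b : Fin (n + 1)} (hab : a ≤ b) :
    χ a ∣ χ b := by
  induction b using Fin.induction with
  | zero => rw [Fin.le_zero_iff.mp hab]
  | succ b ih =>
    rcases hab.lt_or_eq with h | rfl
    · exact (ih (Fin.le_castSucc_iff.mpr h)).trans (hdiv b)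
    · rfl

/-- `(a / |a|)⁻¹` for `a ≠ 0`, in a form that is visibly continuous there. -/
def invPhase (a : ℂ) : ℂ := (starRingEnd ℂ) a / (‖a‖ : ℂ)

lemma norm_invPhase {a : ℂ} (ha : a ≠ 0) : ‖invPhase a‖ = 1 := by
  rw [invPhase, norm_div, Complex.norm_conj, Complex.norm_real, norm_norm,
    div_self (norm_ne_zero_iff.mpr ha)]

lemma invPhase_mul_self (a : ℂ) : invPhase a * a = ‖a‖ := by
  rcases eq_or_ne a 0 with rfl | ha
  · simp
  have ha' : (‖a‖ : ℂ) ≠ 0 := by exact_mod_cast norm_ne_zero_iff.mpr ha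
  rw [invPhase, div_mul_eq_mul_div, mul_comm, Complex.mul_conj, Complex.normSq_eq_norm_sq]
  field_simp
  push_cast
  ring

lemma invPhase_ofReal {r : ℝ} (hr : 0 < r) : invPhase r = 1 := by
  rw [invPhase, Complex.conj_ofReal, Complex.norm_real, Real.norm_of_nonneg hr.le,
    div_self (by exact_mod_cast hr.ne')]

lemma invPhase_mul {u : ℂ} (hu : ‖u‖ = 1) (a : ℂ) : invPhase (u * a) = u⁻¹ * invPhase a := by
  have hconj : (starRingEnd ℂ) u = u⁻¹ := by
    rw [Complex.inv_def, Complex.normSq_eq_norm_sq, hu]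
    simp
  rw [invPhase, invPhase, map_mul, hconj, norm_mul, hu, one_mul, mul_div_assoc]

lemma continuousOn_invPhase : ContinuousOn invPhase {a | a ≠ 0} :=
  (Complex.continuous_conj.continuousOn).div
    (Complex.continuous_ofReal.comp continuous_norm).continuousOn
    fun _ ha => by exact_mod_cast norm_ne_zero_iff.mpr ha

section Coordinates

variable {n : ℕ}

def pivot (n i : ℕ) : Fin (n + 1) := ⟨n - i, Nat.lt_succ_of_le (Nat.sub_le n i)⟩

def tailIdx (n i : ℕ) (hi : i ≤ n) (k : Fin i) : Fin (n + 1) := ⟨n - i + 1 + k, by omega⟩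

lemma lt_or_eq_pivot_or_eq_tailIdx {i : ℕ} (hi : i ≤ n) (j : Fin (n + 1)) :
    (j : ℕ) < n - i ∨ j = pivot n i ∨ ∃ k, j = tailIdx n i hi k := by
  rcases lt_trichotomy (j : ℕ) (n - i) with h | h | h
  · exact .inl h
  · exact .inr (.inl (Fin.ext h))
  · exact .inr (.inr ⟨⟨j - (n - i + 1), by omega⟩, Fin.ext (by simp [tailIdx]; omega)⟩)

lemma pivot_le_tailIdx {i : ℕ} (hi : i ≤ n) (k : Fin i) : pivot n i ≤ tailIdx n i hi k :=
  Fin.le_def.mpr (by simp only [pivot, tailIdx]; omega)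

lemma sum_eq_head_add_pivot_add_tail {i : ℕ} (hi : i ≤ n) (f : Fin (n + 1) → ℝ) :
    ∑ j, f j = ∑ j : Fin (n - i), f ⟨j, by omega⟩ + f (pivot n i)
      + ∑ k, f (tailIdx n i hi k) := by
  rw [← Fintype.sum_equiv (finCongr (by omega : n - i + 1 + i = n + 1))
    (fun x => f (finCongr (by omega) x)) f (fun _ => rfl), Fin.sum_univ_add,
    Fin.sum_univ_castSucc]
  rfl

lemma normSq_pivot_add_sum_tail {i : ℕ} (hi : i ≤ n) (z : Sph n)
    (hz0 : ∀ j : Fin (n + 1), (j : ℕ) + i < n → z.1 j = 0) :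
    Complex.normSq (z.1 (pivot n i)) + ∑ k, Complex.normSq (z.1 (tailIdx n i hi k)) = 1 := by
  have hhead : ∑ j : Fin (n - i), Complex.normSq (z.1 ⟨j, by omega⟩) = 0 :=
    Finset.sum_eq_zero fun j _ => by rw [hz0 _ (by simp; omega), map_zero]
  have := sum_eq_head_add_pivot_add_tail hi fun j => Complex.normSq (z.1 j)
  rw [z.2, hhead] at this
  linarith

variable {i : ℕ} (hi : i ≤ n) (w : Fin i → ℂ)

lemma zvec_apply_of_lt {j : Fin (n + 1)} (hj : (j : ℕ) < n - i) : zvec n i hi w j = 0 := by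
  rw [zvec, show Fin.cast (by omega) j = Fin.castAdd i (Fin.castAdd 1 ⟨j, hj⟩) from
    Fin.ext rfl, Fin.append_left, Fin.append_left]

lemma zvec_pivot :
    zvec n i hi w (pivot n i) = ((Real.sqrt (1 - ∑ k, Complex.normSq (w k)) : ℝ) : ℂ) := by
  rw [zvec, show Fin.cast (by omega) (pivot n i) = Fin.castAdd i (Fin.natAdd (n - i) 0) from
    Fin.ext rfl, Fin.append_left, Fin.append_right]

lemma zvec_tailIdx (k : Fin i) : zvec n i hi w (tailIdx n i hi k) = w k := by
  rw [zvec, show Fin.cast (by omega) (tailIdx n i hi k) = Fin.natAdd (n - i + 1) k from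
    Fin.ext rfl, Fin.append_right]

lemma zvec_zero (w : Fin 0 → ℂ) : zvec n 0 (Nat.zero_le n) w = (eN n).1 := by
  funext j
  rcases lt_or_eq_pivot_or_eq_tailIdx (Nat.zero_le n) j with hj | rfl | ⟨k, -⟩
  · exact (zvec_apply_of_lt _ _ hj).trans (if_neg (by omega)).symm
  · rw [zvec_pivot]
    simp [eN, pivot]
  · exact k.elim0

end Coordinates

section Orbits

variable {n : ℕ} {χ : Fin (n + 1) → ℕ}

lemma WPrel.equivalence (n : ℕ) (χ : Fin (n + 1) → ℕ) : Equivalence (WPrel n χ) where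
  refl _ := ⟨1, by simp, fun _ => by simp⟩
  symm := by
    rintro z z' ⟨t, ht, h⟩
    have ht0 : t ≠ 0 := norm_ne_zero_iff.mp (by rw [ht]; exact one_ne_zero)
    refine ⟨t⁻¹, by simp [ht], fun j => ?_⟩
    rw [h j, inv_pow, inv_mul_cancel_left₀ (pow_ne_zero _ ht0)]
  trans := by
    rintro z z' z'' ⟨t, ht, h⟩ ⟨s, hs, h'⟩
    exact ⟨s * t, by simp [ht, hs], fun j => by rw [h' j, h j, mul_pow, mul_assoc]⟩

lemma WPS.mk_eq_mk_iff {z z' : Sph n} :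
    (Quot.mk _ z : WPS n χ) = Quot.mk _ z' ↔ WPrel n χ z z' := by
  rw [Quot.eq, Equivalence.eqvGen_iff (WPrel.equivalence n χ)]

lemma WPrel.apply_eq_zero_iff {z z' : Sph n} (h : WPrel n χ z z') (j : Fin (n + 1)) :
    z'.1 j = 0 ↔ z.1 j = 0 := by
  obtain ⟨t, ht, h⟩ := h
  have ht0 : t ≠ 0 := norm_ne_zero_iff.mp (by rw [ht]; exact one_ne_zero)
  rw [h j, mul_eq_zero, or_iff_right (pow_ne_zero _ ht0)]

lemma mk_mem_cell_iff {i : ℕ} {z : Sph n} :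
    (Quot.mk _ z : WPS n χ) ∈ cell n χ i ↔
      (∀ j : Fin (n + 1), (j : ℕ) + i < n → z.1 j = 0) ∧ z.1 (pivot n i) ≠ 0 := by
  refine ⟨?_, fun ⟨hz0, hne⟩ => ⟨z, hz0, hne, rfl⟩⟩
  rintro ⟨z', hz0, hne, he⟩
  have hrel := WPS.mk_eq_mk_iff.mp he
  exact ⟨fun j hj => (hrel.apply_eq_zero_iff j).mp (hz0 j hj),
    fun h0 => hne ((hrel.apply_eq_zero_iff _).mpr h0)⟩

lemma exists_first_ne_zero (z : Sph n) :
    ∃ m : Fin (n + 1), z.1 m ≠ 0 ∧ ∀ j < m, z.1 j = 0 := by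
  have hne : ∃ j, z.1 j ≠ 0 := by
    by_contra! h
    simpa [h] using z.2
  obtain ⟨m, hm, hmin⟩ := wellFounded_lt.has_min {j | z.1 j ≠ 0} hne
  exact ⟨m, hm, fun j hj => by_contra fun h => hmin j h hj⟩

lemma mk_mem_cell_of_first_ne_zero {z : Sph n} {m : Fin (n + 1)} (hm : z.1 m ≠ 0)
    (hmin : ∀ j < m, z.1 j = 0) : (Quot.mk _ z : WPS n χ) ∈ cell n χ (n - m) := by
  refine mk_mem_cell_iff.mpr ⟨fun j hj => hmin j (Fin.lt_def.mpr (by omega)), ?_⟩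
  rwa [show pivot n (n - m) = m from Fin.ext (by simp [pivot]; omega)]

end Orbits

section CharacteristicMaps

variable {n : ℕ} {χ : Fin (n + 1) → ℕ} {i : ℕ} (hi : i ≤ n)

lemma continuous_zvec :
    Continuous fun w : {w : Fin i → ℂ // ∑ k, Complex.normSq (w k) ≤ 1} => zvec n i hi w.1 := by
  refine continuous_pi fun j => ?_
  rcases lt_or_eq_pivot_or_eq_tailIdx hi j with hj | rfl | ⟨k, rfl⟩
  · simp only [zvec_apply_of_lt hi _ hj]
    exact continuous_const
  · simp only [zvec_pivot]
    exact Complex.continuous_ofReal.comp <| Real.continuous_sqrt.comp <| continuous_const.sub <|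
      continuous_finsetSum _ fun k _ =>
        Complex.continuous_normSq.comp ((continuous_apply k).comp continuous_subtype_val)
  · simp only [zvec_tailIdx]
    exact (continuous_apply k).comp continuous_subtype_val

lemma continuous_gmap : Continuous (gmap n χ i hi) :=
  continuous_quot_mk.comp ((continuous_zvec hi).subtype_mk _)

lemma gmap_mem_cell (w : Fin i → ℂ) (hw : ∑ k, Complex.normSq (w k) < 1) :
    gmap n χ i hi ⟨w, hw.le⟩ ∈ cell n χ i := by
  refine mk_mem_cell_iff.mpr ⟨fun j hj => zvec_apply_of_lt hi w (by omega), ?_⟩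
  change zvec n i hi w (pivot n i) ≠ 0
  rw [zvec_pivot]
  exact_mod_cast (Real.sqrt_pos.mpr (sub_pos.mpr hw)).ne'

lemma gmap_eq_mk_of_boundary (w : Fin i → ℂ) (hw : ∑ k, Complex.normSq (w k) = 1) :
    ∃ z : Sph n, (∀ j : Fin (n + 1), (j : ℕ) + i ≤ n → z.1 j = 0) ∧
      gmap n χ i hi ⟨w, hw.le⟩ = Quot.mk _ z := by
  refine ⟨⟨zvec n i hi w, zvec_mem n i hi w hw.le⟩, fun j hj => ?_, rfl⟩
  rcases (show (j : ℕ) ≤ n - i by omega).lt_or_eq with h | h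
  · exact zvec_apply_of_lt hi w h
  · change zvec n i hi w j = 0
    rw [show j = pivot n i from Fin.ext h, zvec_pivot, hw, sub_self, Real.sqrt_zero,
      Complex.ofReal_zero]

end CharacteristicMaps

section CellChart

variable {n : ℕ} (χ : Fin (n + 1) → ℕ) {i : ℕ} (hi : i ≤ n)

/-- Inverse of `gᵢ` on the open `2i`-cell: rotating `z` by a root `t` of
`t ^ χ (pivot n i) = invPhase (z pivot)` makes the pivot coordinate positive, and on the tail
`t ^ χ k = invPhase (z pivot) ^ (χ k / χ pivot)` by divisibility. -/
def cellCoord (z : Sph n) : Fin i → ℂ := fun k =>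
  invPhase (z.1 (pivot n i)) ^ (χ (tailIdx n i hi k) / χ (pivot n i)) * z.1 (tailIdx n i hi k)

variable {χ}

lemma cellCoord_eq_of_rel (hdvd : ∀ k, χ (pivot n i) ∣ χ (tailIdx n i hi k)) {z z' : Sph n}
    (h : WPrel n χ z z') : cellCoord χ hi z = cellCoord χ hi z' := by
  obtain ⟨t, ht, hz⟩ := h
  have ht0 : t ≠ 0 := norm_ne_zero_iff.mp (by rw [ht]; exact one_ne_zero)
  funext k
  have hquot : χ (pivot n i) * (χ (tailIdx n i hi k) / χ (pivot n i)) = χ (tailIdx n i hi k) :=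
    Nat.mul_div_cancel' (hdvd k)
  have htk : t ^ χ (tailIdx n i hi k) ≠ 0 := pow_ne_zero _ ht0
  simp only [cellCoord]
  rw [hz, hz, invPhase_mul (by rw [norm_pow, ht, one_pow]), mul_pow, inv_pow, ← pow_mul, hquot]
  field_simp

lemma sum_normSq_cellCoord {z : Sph n} (hz0 : ∀ j : Fin (n + 1), (j : ℕ) + i < n → z.1 j = 0)
    (hne : z.1 (pivot n i) ≠ 0) :
    ∑ k, Complex.normSq (cellCoord χ hi z k) = 1 - Complex.normSq (z.1 (pivot n i)) := by
  have hunit : Complex.normSq (invPhase (z.1 (pivot n i))) = 1 := by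
    rw [Complex.normSq_eq_norm_sq, norm_invPhase hne, one_pow]
  simp only [cellCoord, map_mul, map_pow, hunit, one_pow, one_mul]
  linarith [normSq_pivot_add_sum_tail hi z hz0]

lemma cellCoord_zvec (w : Fin i → ℂ) (hw : ∑ k, Complex.normSq (w k) < 1) :
    cellCoord χ hi ⟨zvec n i hi w, zvec_mem n i hi w hw.le⟩ = w := by
  funext k
  simp only [cellCoord, zvec_pivot, zvec_tailIdx,
    invPhase_ofReal (Real.sqrt_pos.mpr (sub_pos.mpr hw)), one_pow, one_mul]

lemma gmap_cellCoord (hpos : 0 < χ (pivot n i)) (hdvd : ∀ k, χ (pivot n i) ∣ χ (tailIdx n i hi k))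
    {z : Sph n} (hz0 : ∀ j : Fin (n + 1), (j : ℕ) + i < n → z.1 j = 0)
    (hne : z.1 (pivot n i) ≠ 0) (hw : ∑ k, Complex.normSq (cellCoord χ hi z k) ≤ 1) :
    gmap n χ i hi ⟨cellCoord χ hi z, hw⟩ = Quot.mk _ z := by
  obtain ⟨t, ht, htu⟩ := exists_norm_eq_one_pow_eq (norm_invPhase hne) hpos
  refine (WPS.mk_eq_mk_iff.mpr ⟨t, ht, fun j => ?_⟩).symm
  change zvec n i hi (cellCoord χ hi z) j = t ^ χ j * z.1 j
  rcases lt_or_eq_pivot_or_eq_tailIdx hi j with hj | rfl | ⟨k, rfl⟩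
  · rw [zvec_apply_of_lt hi _ hj, hz0 j (by omega), mul_zero]
  · rw [zvec_pivot, sum_normSq_cellCoord hi hz0 hne, sub_sub_cancel, Complex.normSq_eq_norm_sq,
      Real.sqrt_sq (norm_nonneg _), htu, invPhase_mul_self]
  · rw [zvec_tailIdx, cellCoord, ← htu, ← pow_mul, Nat.mul_div_cancel' (hdvd k)]

lemma continuousOn_cellCoord :
    ContinuousOn (cellCoord χ hi) {z : Sph n | z.1 (pivot n i) ≠ 0} := by
  have hcoord (j : Fin (n + 1)) : Continuous fun z : Sph n => z.1 j :=
    (continuous_apply j).comp continuous_subtype_val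
  refine continuousOn_pi.mpr fun k => ContinuousOn.mul ?_ (hcoord _).continuousOn
  exact (continuousOn_invPhase.comp (hcoord _).continuousOn fun _ hz => hz).pow _

def pivotNeZero (n : ℕ) (χ : Fin (n + 1) → ℕ) (i : ℕ) : Set (WPS n χ) :=
  Quot.mk _ '' {z | z.1 (pivot n i) ≠ 0}

lemma mk_preimage_pivotNeZero :
    Quot.mk _ ⁻¹' pivotNeZero n χ i = {z : Sph n | z.1 (pivot n i) ≠ 0} := by
  ext z
  refine ⟨?_, fun hz => ⟨z, hz, rfl⟩⟩
  rintro ⟨z', hz', he⟩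
  exact fun h0 => hz' (((WPS.mk_eq_mk_iff.mp he).apply_eq_zero_iff _).mp h0)

lemma cell_subset_pivotNeZero : cell n χ i ⊆ pivotNeZero n χ i := by
  rintro _ ⟨z, -, hne, rfl⟩
  exact ⟨z, hne, rfl⟩

lemma exists_homeomorph_openDisc_cell (hpos : 0 < χ (pivot n i))
    (hdvd : ∀ k, χ (pivot n i) ∣ χ (tailIdx n i hi k)) :
    ∃ e : {w : Fin i → ℂ // ∑ k, Complex.normSq (w k) < 1} ≃ₜ cell n χ i,
      ∀ w, (e w : WPS n χ) = gmap n χ i hi ⟨w.1, w.2.le⟩ := by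
  let chart : WPS n χ → (Fin i → ℂ) :=
    Quot.lift (cellCoord χ hi) fun _ _ => cellCoord_eq_of_rel hi hdvd
  have hchart : ContinuousOn chart (pivotNeZero n χ i) := by
    refine continuousOn_quot_lift _ ?_ ?_ <;> rw [mk_preimage_pivotNeZero]
    · exact isOpen_ne.preimage ((continuous_apply _).comp continuous_subtype_val)
    · exact continuousOn_cellCoord hi
  have hlt : ∀ p : cell n χ i, ∑ k, Complex.normSq (chart p.1 k) < 1 := by
    rintro ⟨_, z, hz0, hne, rfl⟩
    rw [show chart (Quot.mk _ z) = cellCoord χ hi z from rfl, sum_normSq_cellCoord hi hz0 hne]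
    linarith [Complex.normSq_pos.mpr (show z.1 (pivot n i) ≠ 0 from hne)]
  refine ⟨{ toFun := fun w => ⟨gmap n χ i hi ⟨w.1, w.2.le⟩, gmap_mem_cell hi w.1 w.2⟩
            invFun := fun p => ⟨chart p.1, hlt p⟩
            left_inv := fun w => Subtype.ext (cellCoord_zvec hi w.1 w.2)
            right_inv := ?_
            continuous_toFun := ?_
            continuous_invFun := ?_ }, fun _ => rfl⟩
  · rintro ⟨_, z, hz0, hne, rfl⟩
    exact Subtype.ext (gmap_cellCoord hi hpos hdvd hz0 hne _)
  · exact ((continuous_gmap hi).comp (continuous_subtype_val.subtype_mk _)).subtype_mk _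
  · exact ((hchart.mono cell_subset_pivotNeZero).domRestrict).subtype_mk _

end CellChart

section Cells

variable {n : ℕ} {χ : Fin (n + 1) → ℕ}

lemma gmap_zero (w : Fin 0 → ℂ) (hw : ∑ k, Complex.normSq (w k) ≤ 1) :
    gmap n χ 0 (Nat.zero_le n) ⟨w, hw⟩ = Quot.mk _ (eN n) :=
  congrArg (Quot.mk _) (Subtype.ext (zvec_zero w))

lemma cell_zero (hpos : 0 < χ (pivot n 0)) : cell n χ 0 = {Quot.mk _ (eN n)} := by
  ext p
  refine ⟨?_, ?_⟩
  · rintro ⟨z, hz0, hne, rfl⟩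
    rw [← gmap_cellCoord (Nat.zero_le n) hpos (fun k => k.elim0) hz0 hne (by simp), gmap_zero]
    rfl
  · rintro rfl
    rw [← gmap_zero Fin.elim0 (by simp)]
    exact gmap_mem_cell _ _ (by simp)

lemma exists_mem_cell (p : WPS n χ) : ∃ i ≤ n, p ∈ cell n χ i := by
  induction p using Quot.ind with
  | mk z =>
    obtain ⟨m, hm, hmin⟩ := exists_first_ne_zero z
    exact ⟨n - m, Nat.sub_le _ _, mk_mem_cell_of_first_ne_zero hm hmin⟩

lemma setOf_vanishing_eq_iUnion_cell {i : ℕ} (hi : i ≤ n) :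
    {p : WPS n χ | ∃ z : Sph n, (∀ j : Fin (n + 1), (j : ℕ) + i ≤ n → z.1 j = 0) ∧
      p = Quot.mk _ z} = ⋃ i' < i, cell n χ i' := by
  ext p
  simp only [Set.mem_ofPred_eq, Set.mem_iUnion]
  constructor
  · rintro ⟨z, hz0, rfl⟩
    obtain ⟨m, hm, hmin⟩ := exists_first_ne_zero z
    have hm_gt : n - i < (m : ℕ) := by
      by_contra! h
      exact hm (hz0 m (by omega))
    exact ⟨n - m, by omega, mk_mem_cell_of_first_ne_zero hm hmin⟩
  · rintro ⟨i', hi', z, hz0, -, rfl⟩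
    exact ⟨z, fun j hj => hz0 j (by omega), rfl⟩

lemma notMem_cell_of_lt {i i' : ℕ} (hii' : i < i') (hi' : i' ≤ n) {p : WPS n χ}
    (hp : p ∈ cell n χ i) : p ∉ cell n χ i' := by
  obtain ⟨z, hz0, -, rfl⟩ := hp
  intro hp'
  exact (mk_mem_cell_iff.mp hp').2 (hz0 _ (by simp [pivot]; omega))

lemma cell_inter_cell_eq_empty {i i' : ℕ} (hi : i ≤ n) (hi' : i' ≤ n) (hne : i ≠ i') :
    cell n χ i ∩ cell n χ i' = ∅ := by
  refine Set.eq_empty_of_forall_notMem fun p ⟨hp, hp'⟩ => ?_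
  rcases hne.lt_or_gt with h | h
  · exact notMem_cell_of_lt h hi' hp hp'
  · exact notMem_cell_of_lt h hi hp' hp

end Cells

theorem wps_cw_structure_general (n : ℕ) (χ : Fin (n + 1) → ℕ) (hpos : ∀ j, 0 < χ j)
    (hdiv : ∀ j : Fin n, χ j.castSucc ∣ χ j.succ) :
    (∀ i (hi : i ≤ n), Continuous (gmap n χ i hi)) ∧
    (∀ i (hi1 : 1 ≤ i) (hi : i ≤ n),
      ∃ e : {w : Fin i → ℂ // ∑ k, Complex.normSq (w k) < 1} ≃ₜ cell n χ i,
        ∀ w : {w : Fin i → ℂ // ∑ k, Complex.normSq (w k) < 1},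
          (e w : WPS n χ) = gmap n χ i hi ⟨w.1, le_of_lt w.2⟩) ∧
    (∀ i (hi1 : 1 ≤ i) (hi : i ≤ n) (w : Fin i → ℂ)
        (hw : ∑ k, Complex.normSq (w k) = 1),
      ∃ z : Sph n, (∀ j : Fin (n + 1), (j : ℕ) + i ≤ n → z.1 j = 0) ∧
        gmap n χ i hi ⟨w, le_of_eq hw⟩ = Quot.mk _ z) ∧
    (∀ i, 1 ≤ i → i ≤ n →
      {p : WPS n χ | ∃ z : Sph n, (∀ j : Fin (n + 1), (j : ℕ) + i ≤ n → z.1 j = 0) ∧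
          p = Quot.mk _ z}
        = ⋃ i' < i, cell n χ i') ∧
    (cell n χ 0 = {Quot.mk _ (eN n)}) ∧
    (∀ p : WPS n χ, ∃ i ≤ n, p ∈ cell n χ i) ∧
    (∀ i i', i ≤ n → i' ≤ n → i ≠ i' → cell n χ i ∩ cell n χ i' = ∅) :=
  ⟨fun _ hi => continuous_gmap hi,
    fun _ _ hi => exists_homeomorph_openDisc_cell hi (hpos _)
      fun k => dvd_of_le_of_dvd_succ hdiv (pivot_le_tailIdx hi k),
    fun _ _ hi => gmap_eq_mk_of_boundary hi,
    fun _ _ hi => setOf_vanishing_eq_iUnion_cell hi,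
    cell_zero (hpos _),
    exists_mem_cell,
    fun _ _ hi hi' hne => cell_inter_cell_eq_empty hi hi' hne⟩

/-- **Proposition 2.5.** For every normalized divisive weight vector `χ`, the maps
`g₀, g₁, …, gₙ` are characteristic maps of a CW-structure on `ℙ(χ)` with exactly `n+1`
cells, one of each even dimension `0, 2, …, 2n`:
* each `gᵢ` is continuous;
* for `1 ≤ i ≤ n` the restriction of `gᵢ` to the open disc `{w : |w| < 1}` is a
  homeomorphism onto the open cell `{[z] : z₀ = ⋯ = z_{n−i−1} = 0, z_{n−i} ≠ 0}`;
* for `1 ≤ i ≤ n`, `gᵢ` maps the boundary sphere `{w : |w| = 1}` into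
  `{[z] : z₀ = ⋯ = z_{n−i} = 0}`, which is the union of all lower-dimensional cells;
* the zero cell is `{[0,…,0,1]}`;
* the cells cover `ℙ(χ)` and are pairwise disjoint. -/
theorem wps_cw_structure (n : ℕ) (χ : Fin (n + 1) → ℕ) (hpos : ∀ j, 0 < χ j)
    (hdiv : ∀ j : Fin n, χ j.castSucc ∣ χ j.succ)
    (hnorm : ∀ j : Fin (n + 1), Finset.gcd (Finset.univ.erase j) χ = 1) :
    (∀ i (hi : i ≤ n), Continuous (gmap n χ i hi)) ∧
    (∀ i (hi1 : 1 ≤ i) (hi : i ≤ n),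
      ∃ e : {w : Fin i → ℂ // ∑ k, Complex.normSq (w k) < 1} ≃ₜ cell n χ i,
        ∀ w : {w : Fin i → ℂ // ∑ k, Complex.normSq (w k) < 1},
          (e w : WPS n χ) = gmap n χ i hi ⟨w.1, le_of_lt w.2⟩) ∧
    (∀ i (hi1 : 1 ≤ i) (hi : i ≤ n) (w : Fin i → ℂ)
        (hw : ∑ k, Complex.normSq (w k) = 1),
      ∃ z : Sph n, (∀ j : Fin (n + 1), (j : ℕ) + i ≤ n → z.1 j = 0) ∧
        gmap n χ i hi ⟨w, le_of_eq hw⟩ = Quot.mk _ z) ∧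
    (∀ i, 1 ≤ i → i ≤ n →
      {p : WPS n χ | ∃ z : Sph n, (∀ j : Fin (n + 1), (j : ℕ) + i ≤ n → z.1 j = 0) ∧
          p = Quot.mk _ z}
        = ⋃ i' < i, cell n χ i') ∧
    (cell n χ 0 = {Quot.mk _ (eN n)}) ∧
    (∀ p : WPS n χ, ∃ i ≤ n, p ∈ cell n χ i) ∧
    (∀ i i', i ≤ n → i' ≤ n → i ≠ i' → cell n χ i ∩ cell n χ i' = ∅) :=
  wps_cw_structure_general n χ hpos hdiv
end
end

section
/- (Corollary 2.6) Let χ be a weight vector with χ_0 = 1. Then the formula (u_1,…,u_n)·[z_0,z_1,…,z_n] = [z_0, u_1 z_1, …, u_n z_n] defines a well-defined continuous action of the torus T^n on ℙ(χ), and for every 0 ≤ i ≤ n this action maps the set {[z] ∈ ℙ(χ) : z_0 = ⋯ = z_{n−i−1} = 0, z_{n−i} ≠ 0} onto itself; in particular, for divisive χ the CW-structure with characteristic maps g_0,…,g_n is invariant under the residual T^n-action. -/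
noncomputable section

open Complex

/-- The compact torus `Tⁿ = {(u₁,…,uₙ) ∈ ℂⁿ : |uⱼ| = 1}`. -/
abbrev Torus (n : ℕ) := {u : Fin n → ℂ // ∀ j, ‖u j‖ = 1}


/-! The residual action is the restriction, along `u ↦ (1, u)`, of the coordinatewise action
of the full torus `T^{n+1}` on `S^{2n+1}`. That action commutes with the weighted circle
`T(χ) ≤ T^{n+1}`, so it descends to `ℙ(χ)`; it is continuous there because the quotient map
of a group action is open, and it preserves each cell because it preserves which
coordinates vanish. -/

namespace Torus

variable {n : ℕ}

lemma ne_zero (w : Torus n) (j : Fin n) : w.1 j ≠ 0 :=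
  norm_ne_zero_iff.1 (by simp [w.2 j])

def inv (w : Torus n) : Torus n :=
  ⟨fun j => (w.1 j)⁻¹, fun j => by simp [w.2 j]⟩

def weighted (χ : Fin n → ℕ) (t : Circle) : Torus n :=
  ⟨fun j => (t : ℂ) ^ χ j, fun j => by simp [Circle.norm_coe]⟩

def consOne (u : Torus n) : Torus (n + 1) :=
  ⟨Fin.cons 1 u.1, Fin.cases (by simp) fun j => by simpa using u.2 j⟩

lemma continuous_consOne : Continuous (consOne : Torus n → Torus (n + 1)) := by
  unfold consOne; fun_prop

end Torus

namespace Sph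

variable {n : ℕ}

def scale (w : Torus (n + 1)) (z : Sph n) : Sph n :=
  ⟨w.1 * z.1, by
    have hw : ∀ j, Complex.normSq (w.1 j) = 1 := fun j => by
      rw [Complex.normSq_eq_norm_sq, w.2 j, one_pow]
    simpa [Complex.normSq_mul, hw] using z.2⟩

@[simp] lemma scale_apply (w : Torus (n + 1)) (z : Sph n) (j : Fin (n + 1)) :
    (scale w z).1 j = w.1 j * z.1 j := rfl

lemma scale_eq_self {w : Torus (n + 1)} (hw : ∀ j, w.1 j = 1) (z : Sph n) : scale w z = z :=
  Subtype.ext <| funext fun j => by simp [hw j]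

lemma scale_scale {w w' ww' : Torus (n + 1)} (h : ∀ j, ww'.1 j = w.1 j * w'.1 j)
    (z : Sph n) : scale w (scale w' z) = scale ww' z :=
  Subtype.ext <| funext fun j => by simp [h j, mul_assoc]

lemma scale_comm (w w' : Torus (n + 1)) (z : Sph n) :
    scale w (scale w' z) = scale w' (scale w z) :=
  Subtype.ext <| funext fun j => by simp [mul_left_comm]

lemma scale_scale_of_mul_eq_one {w w' : Torus (n + 1)} (h : ∀ j, w.1 j * w'.1 j = 1)
    (z : Sph n) : scale w (scale w' z) = z :=
  Subtype.ext <| funext fun j => by simp [← mul_assoc, h j]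

lemma scale_apply_eq_zero_iff (w : Torus (n + 1)) (z : Sph n) (j : Fin (n + 1)) :
    (scale w z).1 j = 0 ↔ z.1 j = 0 := by
  simp [w.ne_zero j]

lemma continuous_scale : Continuous fun q : Torus (n + 1) × Sph n => scale q.1 q.2 :=
  ((continuous_subtype_val.comp continuous_fst).mul
    (continuous_subtype_val.comp continuous_snd)).subtype_mk _

end Sph

open Sph

namespace WPS

variable {n : ℕ} {χ : Fin (n + 1) → ℕ}

lemma wprel_iff {z z' : Sph n} :
    WPrel n χ z z' ↔ ∃ t : Circle, z' = scale (Torus.weighted χ t) z := by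
  constructor
  · rintro ⟨t, ht, h⟩
    exact ⟨⟨t, mem_sphere_zero_iff_norm.2 ht⟩, Subtype.ext (funext h)⟩
  · rintro ⟨t, rfl⟩
    exact ⟨t, Circle.norm_coe t, fun j => rfl⟩

lemma wprel_equivalence : Equivalence (WPrel n χ) where
  refl z := wprel_iff.2 ⟨1, (scale_eq_self (by simp [Torus.weighted]) z).symm⟩
  symm := by
    simp only [wprel_iff]
    rintro z _ ⟨t, rfl⟩
    refine ⟨t⁻¹, (scale_scale_of_mul_eq_one (fun j => ?_) z).symm⟩
    simp [Torus.weighted]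
  trans := by
    simp only [wprel_iff]
    rintro z _ _ ⟨t, rfl⟩ ⟨s, rfl⟩
    exact ⟨s * t, scale_scale (fun j => by simp [Torus.weighted, mul_pow]) z⟩

lemma mk_eq_mk_iff_s4 {z z' : Sph n} :
    Quot.mk (WPrel n χ) z = Quot.mk _ z' ↔ WPrel n χ z z' :=
  Quot.eq.trans wprel_equivalence.eqvGen_iff

lemma isOpenQuotientMap_mk : IsOpenQuotientMap (Quot.mk (WPrel n χ)) := by
  refine ⟨Quot.exists_rep, continuous_quot_mk, fun U hU => ?_⟩
  have saturation : Quot.mk (WPrel n χ) ⁻¹' (Quot.mk _ '' U) =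
      ⋃ t : Circle, scale (Torus.weighted χ t) ⁻¹' U := by
    ext z
    simp only [Set.mem_preimage, Set.mem_image, Set.mem_iUnion, mk_eq_mk_iff_s4]
    constructor
    · rintro ⟨z', hz', hrel⟩
      obtain ⟨t, rfl⟩ := wprel_iff.1 (wprel_equivalence.symm hrel)
      exact ⟨t, hz'⟩
    · rintro ⟨t, ht⟩
      exact ⟨_, ht, wprel_equivalence.symm (wprel_iff.2 ⟨t, rfl⟩)⟩
  rw [isOpen_coinduced, saturation]
  exact isOpen_iUnion fun t =>
    hU.preimage (continuous_scale.comp (continuous_const.prodMk continuous_id))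

variable (χ) in
def torusMap (w : Torus (n + 1)) : WPS n χ → WPS n χ :=
  Quot.map (scale w) fun z z' hrel => by
    obtain ⟨t, rfl⟩ := wprel_iff.1 hrel
    exact wprel_iff.2 ⟨t, scale_comm _ _ _⟩

lemma torusMap_mk (w : Torus (n + 1)) (z : Sph n) :
    torusMap χ w (Quot.mk _ z) = Quot.mk _ (scale w z) := rfl

lemma torusMap_eq_self {w : Torus (n + 1)} (hw : ∀ j, w.1 j = 1) (p : WPS n χ) :
    torusMap χ w p = p := by
  induction p using Quot.ind with
  | mk z => rw [torusMap_mk, scale_eq_self hw]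

lemma torusMap_torusMap {w w' ww' : Torus (n + 1)} (h : ∀ j, ww'.1 j = w.1 j * w'.1 j)
    (p : WPS n χ) : torusMap χ w (torusMap χ w' p) = torusMap χ ww' p := by
  induction p using Quot.ind with
  | mk z => rw [torusMap_mk, torusMap_mk, torusMap_mk, scale_scale h]

lemma torusMap_torusMap_of_mul_eq_one {w w' : Torus (n + 1)} (h : ∀ j, w.1 j * w'.1 j = 1)
    (p : WPS n χ) : torusMap χ w (torusMap χ w' p) = p := by
  induction p using Quot.ind with
  | mk z => rw [torusMap_mk, torusMap_mk, scale_scale_of_mul_eq_one h]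

lemma continuous_torusMap :
    Continuous fun q : Torus (n + 1) × WPS n χ => torusMap χ q.1 q.2 := by
  have hq := (IsOpenQuotientMap.id (X := Torus (n + 1))).prodMap (isOpenQuotientMap_mk (χ := χ))
  rw [hq.isQuotientMap.continuous_iff]
  exact continuous_quot_mk.comp continuous_scale

lemma torusMap_image_cell_subset (w : Torus (n + 1)) (i : ℕ) :
    torusMap χ w '' cell n χ i ⊆ cell n χ i := by
  rintro _ ⟨_, ⟨z, hzero, hne, rfl⟩, rfl⟩
  refine ⟨scale w z, fun j hj => ?_, ?_, rfl⟩
  · rw [scale_apply_eq_zero_iff]; exact hzero j hj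
  · rwa [Ne, scale_apply_eq_zero_iff]

lemma torusMap_image_cell (w : Torus (n + 1)) (i : ℕ) :
    torusMap χ w '' cell n χ i = cell n χ i := by
  refine (torusMap_image_cell_subset w i).antisymm fun p hp => ?_
  refine ⟨torusMap χ w.inv p, torusMap_image_cell_subset w.inv i ⟨p, hp, rfl⟩, ?_⟩
  exact torusMap_torusMap_of_mul_eq_one (fun j => mul_inv_cancel₀ (w.ne_zero j)) p

end WPS

open WPS in
theorem residual_torus_action_general (n : ℕ) (χ : Fin (n + 1) → ℕ) :
    ∃ act : Torus n → WPS n χ → WPS n χ,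
      -- the action is induced by the stated formula on homogeneous coordinates
      (∀ (u : Torus n) (z z' : Sph n),
        z'.1 0 = z.1 0 → (∀ j : Fin n, z'.1 j.succ = u.1 j * z.1 j.succ) →
        act u (Quot.mk _ z) = Quot.mk _ z') ∧
      -- it is an action of the torus
      (∀ one : Torus n, (∀ j, one.1 j = 1) → ∀ p, act one p = p) ∧
      (∀ u v uv : Torus n, (∀ j, uv.1 j = u.1 j * v.1 j) →
        ∀ p, act uv p = act u (act v p)) ∧
      -- it is continuous
      Continuous (fun q : Torus n × WPS n χ => act q.1 q.2) ∧
      -- each cell is mapped onto itself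
      (∀ u : Torus n, ∀ i ≤ n, act u '' cell n χ i = cell n χ i) := by
  refine ⟨fun u => torusMap χ u.consOne, ?_, ?_, ?_, ?_, fun u i _ => torusMap_image_cell _ i⟩
  · intro u z z' h0 hsucc
    refine congrArg (Quot.mk _) (Subtype.ext (funext fun j => ?_))
    cases j using Fin.cases with
    | zero => simp [Torus.consOne, h0]
    | succ k => simp [Torus.consOne, hsucc k]
  · intro one hone
    exact torusMap_eq_self (Fin.cases rfl fun j => hone j)
  · intro u v uv huv p
    exact (torusMap_torusMap (Fin.cases (one_mul 1).symm fun j => huv j) p).symm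
  · exact continuous_torusMap.comp (Torus.continuous_consOne.prodMap continuous_id)

/-- **Corollary 2.6.** For a weight vector `χ` with `χ₀ = 1`, the formula
`(u₁,…,uₙ)·[z₀,z₁,…,zₙ] = [z₀, u₁z₁, …, uₙzₙ]` defines a well-defined continuous
action of the torus `Tⁿ` on `ℙ(χ)`, and for every `0 ≤ i ≤ n` this action maps the set
`{[z] : z₀ = ⋯ = z_{n−i−1} = 0, z_{n−i} ≠ 0}` onto itself; in particular, for divisive
`χ` the CW-structure with characteristic maps `g₀,…,gₙ` is invariant under the residual
`Tⁿ`-action. -/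
theorem residual_torus_action (n : ℕ) (χ : Fin (n + 1) → ℕ) (hpos : ∀ j, 0 < χ j)
    (hχ0 : χ 0 = 1) :
    ∃ act : Torus n → WPS n χ → WPS n χ,
      -- the action is induced by the stated formula on homogeneous coordinates
      (∀ (u : Torus n) (z z' : Sph n),
        z'.1 0 = z.1 0 → (∀ j : Fin n, z'.1 j.succ = u.1 j * z.1 j.succ) →
        act u (Quot.mk _ z) = Quot.mk _ z') ∧
      -- it is an action of the torus
      (∀ one : Torus n, (∀ j, one.1 j = 1) → ∀ p, act one p = p) ∧
      (∀ u v uv : Torus n, (∀ j, uv.1 j = u.1 j * v.1 j) →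
        ∀ p, act uv p = act u (act v p)) ∧
      -- it is continuous
      Continuous (fun q : Torus n × WPS n χ => act q.1 q.2) ∧
      -- each cell is mapped onto itself
      (∀ u : Torus n, ∀ i ≤ n, act u '' cell n χ i = cell n χ i) :=
  residual_torus_action_general n χ
end
end

section
/- (Criteria 3.4, K-theoretic case) Let J, J' ∈ ℤ^n be linearly independent over ℚ (equivalently, both nonzero and not linearly dependent in ℤ^n). Then the elements 1 − α^J and 1 − α^{J'} are relatively prime in the Laurent polynomial ring S^±_ℤ(α) = ℤ[α_1^{±1},…,α_n^{±1}]: every common divisor of 1 − α^J and 1 − α^{J'} is a unit. -/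
/-!
Grade `ℤ[ℤⁿ]` by an additive functional `φ : ℤⁿ → ℤ`. Since `ℤⁿ` has unique sums, the
`φ`-top (and `φ`-bottom) parts of a product are the products of the `φ`-top (bottom) parts of
the factors, so every divisor of a `φ`-homogeneous element is `φ`-homogeneous. Applied to the
minors `u ↦ K i * u j - K j * u i`, which vanish on `0` and `K`, this shows that any two
exponents `s, s'` of a divisor of `1 - α^K` differ by a multiple of `K` (after clearing
denominators). For a common divisor of `1 - α^J` and `1 - α^{J'}`, `s - s'` is then parallel to
both `J` and `J'`, hence zero, so the divisor is a monomial `c α^s`. Its coefficient divides the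
constant coefficient `1` of `1 - α^J`, and `α^s` is invertible.
-/

open AddMonoidAlgebra

theorem UniqueSums.exists_isMaxOn_uniqueAdd {A B : Type*} [AddZeroClass A] [UniqueSums A]
    [AddZeroClass B] [LinearOrder B] [AddLeftStrictMono B] [AddRightStrictMono B]
    (φ : A →+ B) {S T : Finset A} (hS : S.Nonempty) (hT : T.Nonempty) :
    ∃ s ∈ S, ∃ t ∈ T, IsMaxOn φ S s ∧ IsMaxOn φ T t ∧ UniqueAdd S T s t := by
  classical
  obtain ⟨s₀, hs₀, hs₀max⟩ := S.exists_max_image φ hS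
  obtain ⟨t₀, ht₀, ht₀max⟩ := T.exists_max_image φ hT
  obtain ⟨s, hs, t, ht, hst⟩ := UniqueSums.uniqueAdd_of_nonempty
    (A := {a ∈ S | φ a = φ s₀}) (B := {b ∈ T | φ b = φ t₀})
    ⟨s₀, Finset.mem_filter.mpr ⟨hs₀, rfl⟩⟩ ⟨t₀, Finset.mem_filter.mpr ⟨ht₀, rfl⟩⟩
  rw [Finset.mem_filter] at hs ht
  have hmax : UniqueAdd (S.image φ) (T.image φ) (φ s₀) (φ t₀) := by
    rintro _ _ hφa hφb hab
    obtain ⟨a, ha, rfl⟩ := Finset.mem_image.mp hφa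
    obtain ⟨b, hb, rfl⟩ := Finset.mem_image.mp hφb
    exact (add_eq_add_iff_eq_and_eq (hs₀max a ha) (ht₀max b hb)).1 hab
  refine ⟨s, hs.1, t, ht.1, fun a ha ↦ hs.2 ▸ hs₀max a ha, fun b hb ↦ ht.2 ▸ ht₀max b hb, ?_⟩
  exact UniqueAdd.of_image_filter φ.toAddHom hs.2 ht.2 hmax hst

namespace AddMonoidAlgebra

variable {R A : Type*}

theorem exists_isMaxOn_add_mem_support_mul {B : Type*} [Semiring R] [NoZeroDivisors R]
    [AddZeroClass A] [UniqueSums A]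
    [AddZeroClass B] [LinearOrder B] [AddLeftStrictMono B] [AddRightStrictMono B]
    (φ : A →+ B) {p q : R[A]} (hp : p ≠ 0) (hq : q ≠ 0) :
    ∃ s ∈ p.coeff.support, ∃ t ∈ q.coeff.support,
      IsMaxOn φ p.coeff.support s ∧ IsMaxOn φ q.coeff.support t ∧
        s + t ∈ (p * q).coeff.support := by
  obtain ⟨s, hs, t, ht, hsmax, htmax, hst⟩ := UniqueSums.exists_isMaxOn_uniqueAdd φ
    (Finsupp.support_nonempty_iff.mpr (coeff_eq_zero.not.mpr hp))
    (Finsupp.support_nonempty_iff.mpr (coeff_eq_zero.not.mpr hq))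
  refine ⟨s, hs, t, ht, hsmax, htmax, ?_⟩
  rw [Finsupp.mem_support_iff, coeff_mul_add_of_uniqueAdd hst]
  exact mul_ne_zero (Finsupp.mem_support_iff.mp hs) (Finsupp.mem_support_iff.mp ht)

theorem apply_eq_of_dvd_of_forall_apply_eq {B : Type*} [Semiring R] [NoZeroDivisors R]
    [AddMonoid A] [UniqueSums A] [AddCommMonoid B] [LinearOrder B] [IsOrderedCancelAddMonoid B]
    (φ : A →+ B) {c : B} {p f : R[A]} (hf : f ≠ 0) (hφf : ∀ a ∈ f.coeff.support, φ a = c)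
    (hpf : p ∣ f) {s s' : A} (hs : s ∈ p.coeff.support) (hs' : s' ∈ p.coeff.support) :
    φ s = φ s' := by
  obtain ⟨q, rfl⟩ := hpf
  have hp := left_ne_zero_of_mul hf
  have hq := right_ne_zero_of_mul hf
  obtain ⟨s₁, hs₁, t₁, ht₁, hs₁max, ht₁max, h₁⟩ := exists_isMaxOn_add_mem_support_mul φ hp hq
  -- maximal for the reversed order on `B`, i.e. `φ`-minimal
  obtain ⟨s₂, hs₂, t₂, ht₂, hs₂min, ht₂min, h₂⟩ :=
    exists_isMaxOn_add_mem_support_mul (B := Bᵒᵈ) φ hp hq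
  have hsum : φ s₂ + φ t₂ = φ s₁ + φ t₁ := by rw [← map_add, ← map_add, hφf _ h₁, hφf _ h₂]
  have hspread : φ s₂ = φ s₁ :=
    ((add_eq_add_iff_eq_and_eq (hs₁max hs₂) (ht₁max ht₂)).1 hsum).1
  have hle : ∀ a ∈ p.coeff.support, ∀ b ∈ p.coeff.support, φ a ≤ φ b := fun a ha b hb ↦
    calc φ a ≤ φ s₁ := isMaxOn_iff.mp hs₁max a ha
      _ = φ s₂ := hspread.symm
      _ ≤ φ b := isMaxOn_iff.mp hs₂min b hb
  exact (hle s hs s' hs').antisymm (hle s' hs' s hs)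

theorem support_coeff_one_sub_single_subset [Ring R] [AddZeroClass A] [DecidableEq A] (a : A)
    (r : R) : (1 - single a r : R[A]).coeff.support ⊆ {0, a} := by
  rw [one_def, coeff_sub, coeff_single, coeff_single]
  exact Finsupp.support_sub.trans (Finset.union_subset_union
    Finsupp.support_single_subset Finsupp.support_single_subset)

theorem coeff_one_sub_single_zero [Ring R] [AddZeroClass A] {a : A} (ha : a ≠ 0) (r : R) :
    (1 - single a r : R[A]).coeff 0 = 1 := by
  rw [one_def, coeff_sub, coeff_single, coeff_single, Finsupp.sub_apply,
    Finsupp.single_eq_same, Finsupp.single_eq_of_ne ha.symm, sub_zero]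

theorem one_sub_single_ne_zero [Ring R] [Nontrivial R] [AddZeroClass A] {a : A} (ha : a ≠ 0)
    (r : R) : (1 - single a r : R[A]) ≠ 0 := fun h ↦ by
  simpa [h] using coeff_one_sub_single_zero ha r

theorem isUnit_single_of_dvd [CommRing R] [AddCommGroup A] {s : A} {c : R} {f : R[A]}
    (hf : single s c ∣ f) {a : A} (ha : IsUnit (f.coeff a)) : IsUnit (single s c) := by
  obtain ⟨e, rfl⟩ := hf
  rw [coeff_single_mul_apply] at ha
  obtain ⟨u, rfl⟩ := isUnit_of_mul_isUnit_left ha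
  refine IsUnit.of_mul_eq_one (single (-s) ↑u⁻¹) ?_
  rw [single_mul_single, add_neg_cancel, Units.mul_inv, one_def]

end AddMonoidAlgebra

variable {ι R : Type*}

def crossMinor [CommRing R] (K : ι → R) (i j : ι) : (ι → R) →+ R :=
  AddMonoidHom.mk' (fun u ↦ K i * u j - K j * u i) fun u v ↦ by simp only [Pi.add_apply]; ring

theorem smul_sub_eq_smul_of_dvd_one_sub_single {S : Type*} [Ring S] [NoZeroDivisors S]
    [Nontrivial S] [CommRing R] [LinearOrder R] [IsStrictOrderedRing R] {K : ι → R} (hK : K ≠ 0)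
    {d : S[ι → R]} (hd : d ∣ 1 - single K 1) {s s' : ι → R}
    (hs : s ∈ d.coeff.support) (hs' : s' ∈ d.coeff.support) (i : ι) :
    K i • (s - s') = (s i - s' i) • K := by
  classical
  funext j
  have hφ : ∀ a ∈ (1 - single K 1 : S[ι → R]).coeff.support, crossMinor K i j a = 0 := by
    intro a ha
    rcases Finset.mem_insert.mp (support_coeff_one_sub_single_subset K 1 ha) with rfl | h
    · exact map_zero _
    · rw [Finset.mem_singleton.mp h, crossMinor, AddMonoidHom.mk'_apply, mul_comm, sub_self]
  have hij := apply_eq_of_dvd_of_forall_apply_eq (crossMinor K i j)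
    (one_sub_single_ne_zero hK 1) hφ hd hs hs'
  simp only [crossMinor, AddMonoidHom.mk'_apply] at hij
  simp only [Pi.smul_apply, Pi.sub_apply, smul_eq_mul]
  linear_combination hij

theorem eq_zero_of_smul_eq_smul_of_linearIndependent [CommRing R] [IsDomain R] {J J' v : ι → R}
    (hind : LinearIndependent R ![J, J'])
    (hJ : ∀ i, J i • v = v i • J) (hJ' : ∀ i, J' i • v = v i • J') : v = 0 := by
  obtain ⟨i, hi⟩ := Function.ne_iff.mp (by simpa using hind.ne_zero 0 : J ≠ 0)
  obtain ⟨k, hk⟩ := Function.ne_iff.mp (by simpa using hind.ne_zero 1 : J' ≠ 0)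
  have hrel : (J' k * v i) • J + (-(J i * v k)) • J' = 0 :=
    calc (J' k * v i) • J + (-(J i * v k)) • J' = J' k • (v i • J) - J i • (v k • J') := by
          rw [mul_smul, neg_smul, mul_smul, sub_eq_add_neg]
      _ = 0 := by rw [← hJ i, ← hJ' k, smul_comm, sub_self]
  have hvi : v i = 0 :=
    (mul_eq_zero.mp (LinearIndependent.pair_iff.mp hind _ _ hrel).1).resolve_left hk
  have hiv : J i • v = 0 := by rw [hJ i, hvi, zero_smul]
  exact (smul_eq_zero.mp hiv).resolve_left hi

/-- **Criteria 3.4, K-theoretic case.**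
If `J, J' ∈ ℤⁿ` are linearly independent (over `ℚ`, equivalently over `ℤ`), then the
equivariant K-theoretic Euler classes `1 - α^J` and `1 - α^{J'}` are relatively prime in the
Laurent polynomial ring `S^±_ℤ(α) = ℤ[α₁^{±1},…,αₙ^{±1}]`, realised as the group algebra
`AddMonoidAlgebra ℤ (Fin n → ℤ)` of `ℤⁿ` over `ℤ` (the monomial `α^J` being
`AddMonoidAlgebra.single J 1`): every common divisor is a unit. -/
theorem kTheory_euler_classes_relatively_prime (n : ℕ) (J J' : Fin n → ℤ)
    (hind : ∀ a b : ℤ, a • J + b • J' = 0 → a = 0 ∧ b = 0) :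
    ∀ d : AddMonoidAlgebra ℤ (Fin n → ℤ),
      d ∣ (1 - AddMonoidAlgebra.single J 1) →
      d ∣ (1 - AddMonoidAlgebra.single J' 1) → IsUnit d := by
  intro d hdJ hdJ'
  have hli : LinearIndependent ℤ ![J, J'] := LinearIndependent.pair_iff.mpr hind
  have hJ : J ≠ 0 := by simpa using hli.ne_zero 0
  have hJ' : J' ≠ 0 := by simpa using hli.ne_zero 1
  obtain ⟨s₀, hs₀⟩ : ∃ s₀, d.coeff.support ⊆ {s₀} := by
    refine Finset.card_le_one_iff_subset_singleton.mp (Finset.card_le_one.mpr fun s hs s' hs' ↦ ?_)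
    exact sub_eq_zero.mp <| eq_zero_of_smul_eq_smul_of_linearIndependent hli
      (smul_sub_eq_smul_of_dvd_one_sub_single hJ hdJ hs hs')
      (smul_sub_eq_smul_of_dvd_one_sub_single hJ' hdJ' hs hs')
  rw [Finsupp.support_subset_singleton, ← coeff_single, coeff_inj] at hs₀
  rw [hs₀] at hdJ ⊢
  exact isUnit_single_of_dvd hdJ (a := 0) (by rw [coeff_one_sub_single_zero hJ]; exact isUnit_one)
end

section
/- (Lemma 5.1, lattice form) Let χ = (χ_0,…,χ_n) be a normalized divisive weight vector and let 0 ≤ k < l ≤ n. Define w_{k,l} ∈ ℤ^n by w_{k,l} = e_l if k = 0 and w_{k,l} = e_l − (χ_l/χ_k)·e_k if k ≥ 1. Then w_{k,l} is orthogonal, for the standard inner product on ℝ^n, to r_i for every i ∈ {0,…,n}∖{k,l}, and conversely every vector of ℤ^n orthogonal to all r_i with i ∉ {k,l} is an integer multiple of w_{k,l}; in particular w_{k,l} is a primitive generator of the rank-one lattice of integer vectors vanishing on the cone σ_{k,l}. -/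
/-- The value `χ_k` of a weight vector at a natural-number index `k ≤ n`
(junk value `1` for `k > n`). -/
def chN (n : ℕ) (χ : Fin (n + 1) → ℕ) (k : ℕ) : ℕ :=
  if h : k < n + 1 then χ ⟨k, h⟩ else 1

/-- The rays of the fan `Σ_χ` of a divisive weighted projective space:
`r₀ = (−χ₁,…,−χₙ)` and `r_j = e_j` for `1 ≤ j ≤ n` (coordinates of `ℤⁿ` are numbered
`1,…,n`, so the coordinate `j` is the `Fin n`-index `k` with `k + 1 = j`). -/
def rvec (n : ℕ) (χ : Fin (n + 1) → ℕ) : Fin (n + 1) → Fin n → ℤ :=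
  fun j k => if (j : ℕ) = 0 then -(χ k.succ : ℤ) else if (k : ℕ) + 1 = (j : ℕ) then 1 else 0

/-- The vector `w_{k,l} ∈ ℤⁿ`: `e_l` if `k = 0`, and `e_l − (χ_l/χ_k)·e_k` if `k ≥ 1`. -/
def wvec (n : ℕ) (χ : Fin (n + 1) → ℕ) (k l : ℕ) : Fin n → ℤ :=
  fun m =>
    if (m : ℕ) + 1 = l then 1
    else if (m : ℕ) + 1 = k then -((chN n χ l / chN n χ k : ℕ) : ℤ)
    else 0

/-!
For `i ≥ 1` the ray `r_i` is the basis vector `e_i`, so orthogonality to the rays `r_i` with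
`i ∉ {k, l}` confines an integer vector `v` to the coordinates `k` and `l`. If `k = 0` nothing
more is imposed and `v = v_l e_l`. If `k ≥ 1` the ray `r_0` is among them and imposes
`χ_k v_k + χ_l v_l = 0`; as `χ_k ∣ χ_l` this reads `v_k = -(χ_l/χ_k) v_l`, i.e. `v = v_l w_{k,l}`.
-/

theorem Fin.dvd_of_le_of_forall_dvd_succ {α : Type*} [Monoid α] {n : ℕ} {f : Fin (n + 1) → α}
    (hf : ∀ j : Fin n, f j.castSucc ∣ f j.succ) {a b : Fin (n + 1)} (hab : a ≤ b) : f a ∣ f b := by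
  induction b using Fin.induction with
  | zero => rw [Fin.le_zero_iff.mp hab]
  | succ j ih =>
    rcases hab.lt_or_eq with hlt | rfl
    · exact (ih (Fin.le_castSucc_iff.mpr hlt)).trans (hf j)
    · rfl

theorem Pi.eq_single_add_single {ι M : Type*} [DecidableEq ι] [AddZeroClass M] {v : ι → M}
    {a b : ι} (hab : a ≠ b) (hv : ∀ j, j ≠ a → j ≠ b → v j = 0) :
    v = Pi.single a (v a) + Pi.single b (v b) := by
  ext j
  by_cases hja : j = a
  · subst hja; simp [hab]
  by_cases hjb : j = b
  · subst hjb; simp [hja]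
  simp [hja, hjb, hv j hja hjb]

theorem Pi.eq_single {ι M : Type*} [DecidableEq ι] [Zero M] {v : ι → M}
    {a : ι} (hv : ∀ j, j ≠ a → v j = 0) : v = Pi.single a (v a) := by
  ext j
  by_cases hja : j = a
  · subst hja; simp
  simp [hja, hv j hja]

section
variable {n : ℕ} {χ : Fin (n + 1) → ℕ}

@[simp]
theorem chN_val (j : Fin (n + 1)) : chN n χ j = χ j :=
  dif_pos j.isLt

theorem rvec_zero : rvec n χ 0 = fun m => -(χ m.succ : ℤ) := by
  ext m; simp [rvec]

theorem rvec_succ (j : Fin n) : rvec n χ j.succ = Pi.single j 1 := by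
  ext m; simp [rvec, Pi.single_apply, Fin.ext_iff]

theorem dotProduct_rvec_zero (v : Fin n → ℤ) :
    v ⬝ᵥ rvec n χ 0 = -∑ m, v m * χ m.succ := by
  simp [rvec_zero, dotProduct]

theorem dotProduct_rvec_succ (v : Fin n → ℤ) (j : Fin n) : v ⬝ᵥ rvec n χ j.succ = v j := by
  simp [rvec_succ]

theorem wvec_zero_succ (L : Fin n) : wvec n χ 0 L.succ = Pi.single L 1 := by
  ext m; simp [wvec, Pi.single_apply, Fin.ext_iff]

theorem wvec_succ_succ {K L : Fin n} (hKL : K ≠ L) :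
    wvec n χ K.succ L.succ = Pi.single K (-((χ L.succ / χ K.succ : ℕ) : ℤ)) + Pi.single L 1 := by
  ext m
  simp only [wvec, chN_val]
  by_cases hmL : m = L
  · subst hmL; simp [hKL.symm]
  by_cases hmK : m = K
  · subst hmK; simp [hmL, Fin.val_ne_iff.mpr hmL]
  simp [hmL, hmK, Fin.val_ne_iff.mpr hmL, Fin.val_ne_iff.mpr hmK]

/-- `v` vanishes on the cone `σ_{k,l}`, i.e. is orthogonal to its rays `r_i`, `i ∉ {k, l}`. -/
def VanishesOnCone (n : ℕ) (χ : Fin (n + 1) → ℕ) (k l : ℕ) (v : Fin n → ℤ) : Prop :=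
  ∀ i : Fin (n + 1), (i : ℕ) ≠ k → (i : ℕ) ≠ l → v ⬝ᵥ rvec n χ i = 0

theorem VanishesOnCone.apply_eq_zero {k l : ℕ} {v : Fin n → ℤ} (hv : VanishesOnCone n χ k l v)
    {j : Fin n} (hk : (j.succ : ℕ) ≠ k) (hl : (j.succ : ℕ) ≠ l) : v j = 0 := by
  simpa [dotProduct_rvec_succ] using hv j.succ hk hl

theorem vanishesOnCone_zero_succ_iff {L : Fin n} {v : Fin n → ℤ} :
    VanishesOnCone n χ 0 L.succ v ↔ ∀ j, j ≠ L → v j = 0 := by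
  refine ⟨fun hv j hj => hv.apply_eq_zero (by simp) (by simpa [Fin.ext_iff] using hj), ?_⟩
  intro hv i hi0 hiL
  obtain ⟨j, rfl⟩ := Fin.exists_succ_eq.mpr (Fin.val_ne_iff.mp hi0)
  rw [dotProduct_rvec_succ]
  exact hv j (by rintro rfl; exact hiL rfl)

theorem vanishesOnCone_succ_succ_iff {K L : Fin n} (hKL : K ≠ L) {v : Fin n → ℤ} :
    VanishesOnCone n χ K.succ L.succ v ↔
      (∀ j, j ≠ K → j ≠ L → v j = 0) ∧ v K * χ K.succ + v L * χ L.succ = 0 := by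
  have hsum : (∀ j, j ≠ K → j ≠ L → v j = 0) →
      v ⬝ᵥ rvec n χ 0 = -(v K * χ K.succ + v L * χ L.succ) := fun hv => by
    rw [dotProduct_rvec_zero, Fintype.sum_eq_add K L hKL fun j hj => by simp [hv j hj.1 hj.2]]
  constructor
  · intro hv
    have hvanish : ∀ j, j ≠ K → j ≠ L → v j = 0 := fun j hjK hjL =>
      hv.apply_eq_zero (by simpa [Fin.ext_iff] using hjK) (by simpa [Fin.ext_iff] using hjL)
    refine ⟨hvanish, ?_⟩
    have h0 := hv 0 (by simp) (by simp)
    rw [hsum hvanish] at h0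
    linarith
  · rintro ⟨hvanish, hrel⟩ i hiK hiL
    induction i using Fin.cases with
    | zero => rw [hsum hvanish, hrel, neg_zero]
    | succ j =>
      rw [dotProduct_rvec_succ]
      exact hvanish j (by rintro rfl; exact hiK rfl) (by rintro rfl; exact hiL rfl)

theorem vanishesOnCone_zero_succ_iff_exists_eq_smul_wvec {L : Fin n} {v : Fin n → ℤ} :
    VanishesOnCone n χ 0 L.succ v ↔ ∃ c : ℤ, v = c • wvec n χ 0 L.succ := by
  rw [vanishesOnCone_zero_succ_iff, wvec_zero_succ]
  constructor
  · intro hv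
    refine ⟨v L, ?_⟩
    conv_lhs => rw [Pi.eq_single hv]
    rw [← Pi.single_smul', smul_eq_mul, mul_one]
  · rintro ⟨c, rfl⟩ j hj
    simp [hj]

theorem vanishesOnCone_succ_succ_iff_exists_eq_smul_wvec {K L : Fin n} (hKL : K ≠ L)
    (hK : 0 < χ K.succ) (hdvd : χ K.succ ∣ χ L.succ) {v : Fin n → ℤ} :
    VanishesOnCone n χ K.succ L.succ v ↔ ∃ c : ℤ, v = c • wvec n χ K.succ L.succ := by
  obtain ⟨q, hq⟩ := hdvd
  rw [vanishesOnCone_succ_succ_iff hKL, wvec_succ_succ hKL, hq, Nat.mul_div_cancel_left _ hK]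
  constructor
  · rintro ⟨hvanish, hrel⟩
    have hvK : v K = -(q * v L) := by
      apply mul_right_cancel₀ (show (χ K.succ : ℤ) ≠ 0 by exact_mod_cast hK.ne')
      push_cast at hrel
      linear_combination hrel
    refine ⟨v L, ?_⟩
    conv_lhs => rw [Pi.eq_single_add_single hKL hvanish, hvK]
    rw [smul_add, ← Pi.single_smul', ← Pi.single_smul', smul_eq_mul, smul_eq_mul, mul_one,
      mul_neg, mul_comm]
  · rintro ⟨c, rfl⟩
    refine ⟨fun j hjK hjL => by simp [hjK, hjL], ?_⟩
    simp only [Pi.smul_apply, Pi.add_apply, Pi.single_eq_same, Pi.single_eq_of_ne hKL,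
      Pi.single_eq_of_ne hKL.symm, add_zero, zero_add, smul_eq_mul, Nat.cast_mul]
    ring

end

theorem wvec_orthogonal_and_generates_general
    (n : ℕ) (χ : Fin (n + 1) → ℕ) (hpos : ∀ j, 0 < χ j)
    (hdiv : ∀ j : Fin n, χ j.castSucc ∣ χ j.succ)
    (k l : ℕ) (hkl : k < l) (hln : l ≤ n) :
    (∀ i : Fin (n + 1), (i : ℕ) ≠ k → (i : ℕ) ≠ l →
      ∑ m, wvec n χ k l m * rvec n χ i m = 0) ∧
    (∀ v : Fin n → ℤ,
      (∀ i : Fin (n + 1), (i : ℕ) ≠ k → (i : ℕ) ≠ l → ∑ m, v m * rvec n χ i m = 0) →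
      ∃ c : ℤ, v = c • wvec n χ k l) := by
  obtain ⟨L, rfl⟩ : ∃ L : Fin n, (L.succ : ℕ) = l := ⟨⟨l - 1, by omega⟩, by simp; omega⟩
  suffices h : ∀ v, VanishesOnCone n χ k L.succ v ↔ ∃ c : ℤ, v = c • wvec n χ k L.succ from
    ⟨(h _).mpr ⟨1, (one_smul ℤ _).symm⟩, fun v => (h v).mp⟩
  rcases Nat.eq_zero_or_pos k with rfl | hk
  · exact fun v => vanishesOnCone_zero_succ_iff_exists_eq_smul_wvec
  obtain ⟨K, rfl⟩ : ∃ K : Fin n, (K.succ : ℕ) = k := ⟨⟨k - 1, by omega⟩, by simp; omega⟩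
  have hKL : K < L := by simpa using hkl
  exact fun v => vanishesOnCone_succ_succ_iff_exists_eq_smul_wvec hKL.ne (hpos K.succ)
    (Fin.dvd_of_le_of_forall_dvd_succ hdiv (Fin.succ_le_succ_iff.mpr hKL.le))

/-- **Lemma 5.1, lattice form.** For a normalized divisive weight vector `χ` and
`0 ≤ k < l ≤ n`, the vector `w_{k,l}` is orthogonal to every ray `r_i` with
`i ∉ {k,l}`, and every integer vector orthogonal to all those rays is an integer
multiple of `w_{k,l}`; thus `w_{k,l}` is a primitive generator of the rank-one
lattice of integer vectors vanishing on the cone `σ_{k,l}`. -/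
theorem wvec_orthogonal_and_generates
    (n : ℕ) (χ : Fin (n + 1) → ℕ) (hpos : ∀ j, 0 < χ j)
    (hdiv : ∀ j : Fin n, χ j.castSucc ∣ χ j.succ)
    (hnorm : ∀ j : Fin (n + 1), Finset.gcd (Finset.univ.erase j) χ = 1)
    (k l : ℕ) (hkl : k < l) (hln : l ≤ n) :
    (∀ i : Fin (n + 1), (i : ℕ) ≠ k → (i : ℕ) ≠ l →
      ∑ m, wvec n χ k l m * rvec n χ i m = 0) ∧
    (∀ v : Fin n → ℤ,
      (∀ i : Fin (n + 1), (i : ℕ) ≠ k → (i : ℕ) ≠ l → ∑ m, v m * rvec n χ i m = 0) →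
      ∃ c : ℤ, v = c • wvec n χ k l) :=
  wvec_orthogonal_and_generates_general n χ hpos hdiv k l hkl hln
end

section
/- Let χ = (χ_0,…,χ_n) be a normalized divisive weight vector. For all nonempty subsets A, A' ⊆ {0,…,n}, the cones of the fan Σ_χ satisfy σ_A ∩ σ_{A'} = σ_{A ∪ A'}, where σ_A is the cone spanned by the rays {r_i : i ∉ A}. -/
/-- The cone `σ_A ⊆ ℝⁿ` of the fan `Σ_χ`, spanned by the rays `r_i` with `i ∉ A`:
all nonnegative real linear combinations of those rays. -/
def coneA (n : ℕ) (χ : Fin (n + 1) → ℕ) (A : Finset (Fin (n + 1))) : Set (Fin n → ℝ) :=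
  {x | ∃ c : Fin (n + 1) → ℝ, (∀ i, 0 ≤ c i) ∧ (∀ i ∈ A, c i = 0) ∧
    ∀ m, x m = ∑ i, c i * ((rvec n χ i m : ℤ) : ℝ)}

/-!
The rays `r₁,…,rₙ` form a basis and `r₀ = -∑ χⱼ rⱼ`, so two nonnegative representations of
the same point differ by a multiple of the relation `r₀ + ∑ χⱼ rⱼ = 0`, whose coefficients are
all nonnegative. Hence the representation with the smaller coefficient of `r₀` is bounded
coefficientwise by the other one, and it vanishes wherever either representation does.
-/

lemma sum_mul_rvec (n : ℕ) (χ : Fin (n + 1) → ℕ) (c : Fin (n + 1) → ℝ) (m : Fin n) :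
    ∑ i, c i * ((rvec n χ i m : ℤ) : ℝ) = c m.succ - c 0 * χ m.succ := by
  have hsucc : ∀ k : Fin n, c k.succ * ((rvec n χ k.succ m : ℤ) : ℝ)
      = if k = m then c k.succ else 0 := by
    intro k
    by_cases h : k = m
    · subst h
      simp [rvec]
    · have hval : (m : ℕ) ≠ k := fun e => h (Fin.ext e.symm)
      simp [rvec, hval, h]
  rw [Fin.sum_univ_succ, Finset.sum_congr rfl fun k _ => hsucc k,
    Finset.sum_ite_eq' Finset.univ m]
  simp only [rvec, Fin.coe_ofNat_eq_mod, Nat.zero_mod, ↓reduceIte, Int.cast_neg, Int.cast_natCast,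
    mul_neg, Finset.mem_univ]
  ring

lemma le_of_sum_mul_rvec_eq {n : ℕ} {χ : Fin (n + 1) → ℕ} {c c' : Fin (n + 1) → ℝ}
    (h : ∀ m, ∑ i, c i * ((rvec n χ i m : ℤ) : ℝ) = ∑ i, c' i * ((rvec n χ i m : ℤ) : ℝ))
    (h0 : c 0 ≤ c' 0) (i : Fin (n + 1)) : c i ≤ c' i := by
  induction i using Fin.cases with
  | zero => exact h0
  | succ m =>
    have hm := h m
    rw [sum_mul_rvec, sum_mul_rvec] at hm
    have : 0 ≤ (c' 0 - c 0) * χ m.succ := mul_nonneg (by linarith) (Nat.cast_nonneg _)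
    linarith

lemma coneA_anti {n : ℕ} {χ : Fin (n + 1) → ℕ} {A B : Finset (Fin (n + 1))} (hAB : A ⊆ B) :
    coneA n χ B ⊆ coneA n χ A :=
  fun _ ⟨c, hc, hcB, hx⟩ => ⟨c, hc, fun i hi => hcB i (hAB hi), hx⟩

lemma mem_coneA_union_of_le {n : ℕ} {χ : Fin (n + 1) → ℕ} {A A' : Finset (Fin (n + 1))}
    {x : Fin n → ℝ} {c c' : Fin (n + 1) → ℝ} (hc : ∀ i, 0 ≤ c i) (hcA : ∀ i ∈ A, c i = 0)
    (hx : ∀ m, x m = ∑ i, c i * ((rvec n χ i m : ℤ) : ℝ)) (hc'A' : ∀ i ∈ A', c' i = 0)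
    (hx' : ∀ m, x m = ∑ i, c' i * ((rvec n χ i m : ℤ) : ℝ)) (h0 : c 0 ≤ c' 0) :
    x ∈ coneA n χ (A ∪ A') := by
  have hle := le_of_sum_mul_rvec_eq (fun m => (hx m).symm.trans (hx' m)) h0
  refine ⟨c, hc, fun i hi => ?_, hx⟩
  rcases Finset.mem_union.mp hi with hi | hi
  · exact hcA i hi
  · exact le_antisymm (hc'A' i hi ▸ hle i) (hc i)

lemma coneA_inter_subset (n : ℕ) (χ : Fin (n + 1) → ℕ) (A A' : Finset (Fin (n + 1))) :
    coneA n χ A ∩ coneA n χ A' ⊆ coneA n χ (A ∪ A') := by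
  rintro x ⟨⟨c, hc, hcA, hx⟩, ⟨c', hc', hc'A', hx'⟩⟩
  rcases le_total (c 0) (c' 0) with h0 | h0
  · exact mem_coneA_union_of_le hc hcA hx hc'A' hx' h0
  · rw [Finset.union_comm]
    exact mem_coneA_union_of_le hc' hc'A' hx' hcA hx h0

theorem coneA_inter_general (n : ℕ) (χ : Fin (n + 1) → ℕ) :
    ∀ A A' : Finset (Fin (n + 1)), A.Nonempty → A'.Nonempty →
      coneA n χ A ∩ coneA n χ A' = coneA n χ (A ∪ A') := fun A A' _ _ =>
  (coneA_inter_subset n χ A A').antisymm <| Set.subset_inter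
    (coneA_anti Finset.subset_union_left) (coneA_anti Finset.subset_union_right)

/-- For a normalized divisive weight vector `χ` and nonempty subsets
`A, A' ⊆ {0,…,n}`, the cones of the fan `Σ_χ` satisfy `σ_A ∩ σ_{A'} = σ_{A ∪ A'}`. -/
theorem coneA_inter (n : ℕ) (χ : Fin (n + 1) → ℕ) (hpos : ∀ j, 0 < χ j)
    (hdiv : ∀ j : Fin n, χ j.castSucc ∣ χ j.succ)
    (hnorm : ∀ j : Fin (n + 1), Finset.gcd (Finset.univ.erase j) χ = 1) :
    ∀ A A' : Finset (Fin (n + 1)), A.Nonempty → A'.Nonempty →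
      coneA n χ A ∩ coneA n χ A' = coneA n χ (A ∪ A') :=
  coneA_inter_general n χ
end

section
/- (Algebraic core of Theorem 5.2(3), integral coefficients) Let χ = (χ_0,…,χ_n) be a normalized divisive weight vector. Let Γ = {(g_0,…,g_n) ∈ (ℤ[x_1,…,x_n])^{n+1} : for all 0 ≤ j < i ≤ n, the linear form x_{n−j} − (χ_{n−j}/χ_{n−i})·x_{n−i} divides g_i − g_j}, with the convention x_0 = 0. Then the map h sending g ∈ Γ to the family whose component at a nonempty subset A ⊆ {0,…,n} is the class of g_{n − min A} in ℤ[x_1,…,x_n]/J_A is well defined (for all a, a' ∈ A one has g_{n−a} ≡ g_{n−a'} mod J_A), and h is a ring isomorphism from Γ onto the ring P_H(x;Σ_χ) of integral piecewise polynomials on Σ_χ. -/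
open MvPolynomial

set_option synthInstance.maxHeartbeats 400000

noncomputable section

/-- The variable `x_k` of `ℤ[x₁,…,xₙ]` (realised as `MvPolynomial (Fin n) ℤ`, with
`x_k = X ⟨k−1⟩` for `1 ≤ k ≤ n`), with the convention `x₀ = 0`. -/
noncomputable def xvar (n : ℕ) (k : ℕ) : MvPolynomial (Fin n) ℤ :=
  if h : 1 ≤ k ∧ k ≤ n then X ⟨k - 1, by omega⟩ else 0

/-- The linear form `x_l − (χ_l/χ_k)·x_k` (convention `x₀ = 0`, so the form for
`k = 0` is `x_l`, as `χ₀ = 1` for normalized `χ`). -/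
noncomputable def lkl (n : ℕ) (χ : Fin (n + 1) → ℕ) (k l : ℕ) : MvPolynomial (Fin n) ℤ :=
  xvar n l - C ((chN n χ l / chN n χ k : ℕ) : ℤ) * xvar n k

/-- The ideal `J_A ⊆ ℤ[x₁,…,xₙ]` generated by the linear forms `x_l − (χ_l/χ_k)·x_k`
for all `k < l` with `k, l ∈ A`. -/
def JA (n : ℕ) (χ : Fin (n + 1) → ℕ) (A : Finset (Fin (n + 1))) :
    Ideal (MvPolynomial (Fin n) ℤ) :=
  Ideal.span {f | ∃ k l : Fin (n + 1), k ∈ A ∧ l ∈ A ∧ (k : ℕ) < (l : ℕ) ∧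
    f = lkl n χ (k : ℕ) (l : ℕ)}

lemma JA_mono (n : ℕ) (χ : Fin (n + 1) → ℕ) {A A' : Finset (Fin (n + 1))} (h : A ⊆ A') :
    JA n χ A ≤ JA n χ A' :=
  Ideal.span_mono (by rintro f ⟨k, l, hk, hl, hkl, rfl⟩; exact ⟨k, l, h hk, h hl, hkl, rfl⟩)

/-- The GKM ring `Γ`: tuples `(g₀,…,gₙ)` of polynomials such that
`x_{n−j} − (χ_{n−j}/χ_{n−i})·x_{n−i}` divides `gᵢ − gⱼ` for all `0 ≤ j < i ≤ n`. -/
def GammaH (n : ℕ) (χ : Fin (n + 1) → ℕ) :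
    Subring (Fin (n + 1) → MvPolynomial (Fin n) ℤ) where
  carrier := {g | ∀ i j : Fin (n + 1), (j : ℕ) < (i : ℕ) →
    lkl n χ (n - (i : ℕ)) (n - (j : ℕ)) ∣ g i - g j}
  zero_mem' := by intro i j _; simp
  one_mem' := by intro i j _; simp
  add_mem' := by
    intro a b ha hb i j hij
    simpa [add_sub_add_comm] using dvd_add (ha i j hij) (hb i j hij)
  neg_mem' := by
    intro a ha i j hij
    simpa [neg_sub_neg, ← sub_eq_neg_add] using (ha i j hij).neg_right
  mul_mem' := by
    intro a b ha hb i j hij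
    have e : a i * b i - a j * b j = (a i - a j) * b i + a j * (b i - b j) := by ring
    have : lkl n χ (n - (i : ℕ)) (n - (j : ℕ)) ∣ a i * b i - a j * b j := by
      rw [e]; exact dvd_add ((ha i j hij).mul_right _) ((hb i j hij).mul_left _)
    simpa using this

/-- The nonempty subsets of `{0,…,n}`, indexing the cones of the fan `Σ_χ`. -/
abbrev NESet (n : ℕ) := {A : Finset (Fin (n + 1)) // A.Nonempty}

/-- The ring `P_H(x;Σ_χ)` of integral piecewise polynomials on the fan `Σ_χ`: families
`(f_A)` over the nonempty `A ⊆ {0,…,n}`, with `f_A ∈ ℤ[x]/J_A`, compatible under the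
projections `ℤ[x]/J_A → ℤ[x]/J_{A'}` for `A ⊆ A'`. -/
def PHring (n : ℕ) (χ : Fin (n + 1) → ℕ) :
    Subring (Π A : NESet n, MvPolynomial (Fin n) ℤ ⧸ JA n χ A.1) where
  carrier := {f | ∀ (A A' : NESet n) (h : A.1 ⊆ A'.1),
    Ideal.Quotient.factor (JA_mono n χ h) (f A) = f A'}
  zero_mem' := by intro A A' h; simp only [Pi.zero_apply, map_zero]
  one_mem' := by intro A A' h; simp only [Pi.one_apply, map_one]
  add_mem' := by
    intro a b ha hb A A' h
    simp only [Pi.add_apply, map_add, ha A A' h, hb A A' h]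
  neg_mem' := by
    intro a ha A A' h
    simp only [Pi.neg_apply, map_neg, ha A A' h]
  mul_mem' := by
    intro a b ha hb A A' h
    simp only [Pi.mul_apply, map_mul, ha A A' h, hb A A' h]

/-!
A piecewise polynomial is determined by its components at the vertices `{a}`, where `J_{a} = 0`,
since its component at a cone `A` is the image of the one at any vertex of `A`. On an edge
`{a, a'}` the ideal `J_{a,a'}` is principal, generated by the linear form of that edge, so vertex
values come from a piecewise polynomial exactly when they satisfy the divisibility conditions
defining `Γ`, read through the index flip `a ↦ n − a`.
-/

lemma Fin.val_rev_eq_sub {n : ℕ} (i : Fin (n + 1)) : (i.rev : ℕ) = n - i := by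
  rw [Fin.val_rev, Nat.add_sub_add_right]

lemma Fin.sub_val_rev {n : ℕ} (i : Fin (n + 1)) : n - (i.rev : ℕ) = i := by
  rw [Fin.val_rev_eq_sub]; exact Nat.sub_sub_self (Nat.lt_succ_iff.mp i.isLt)

lemma Fin.mk_sub_eq_rev {n : ℕ} (i : Fin (n + 1)) (h : n - (i : ℕ) < n + 1) :
    (⟨n - (i : ℕ), h⟩ : Fin (n + 1)) = i.rev :=
  Fin.ext (Fin.val_rev_eq_sub i).symm

section Fan

variable (n : ℕ) (χ : Fin (n + 1) → ℕ)

lemma JA_singleton (a : Fin (n + 1)) : JA n χ {a} = ⊥ := by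
  rw [JA, Ideal.span_eq_bot]
  rintro f ⟨k, l, hk, hl, hkl, rfl⟩
  rw [Finset.mem_singleton] at hk hl
  subst hk hl
  exact absurd hkl (lt_irrefl _)

lemma JA_pair {a a' : Fin (n + 1)} (h : a < a') :
    JA n χ {a, a'} = Ideal.span {lkl n χ a a'} := by
  apply le_antisymm
  · rw [JA, Ideal.span_le]
    rintro f ⟨k, l, hk, hl, hkl, rfl⟩
    simp only [Finset.mem_insert, Finset.mem_singleton] at hk hl
    have := Fin.lt_def.mp h
    obtain ⟨rfl, rfl⟩ : k = a ∧ l = a' := by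
      rcases hk with rfl | rfl <;> rcases hl with rfl | rfl <;> first | exact ⟨rfl, rfl⟩ | omega
    exact Ideal.subset_span rfl
  · rw [Ideal.span_le, Set.singleton_subset_iff]
    exact Ideal.subset_span ⟨a, a', by simp, by simp, h, rfl⟩

lemma mem_GammaH_iff {g : Fin (n + 1) → MvPolynomial (Fin n) ℤ} :
    g ∈ GammaH n χ ↔ ∀ a a' : Fin (n + 1), a < a' → lkl n χ a a' ∣ g a.rev - g a'.rev := by
  refine ⟨fun hg a a' h => ?_, fun hg i j h => ?_⟩
  · simpa only [Fin.sub_val_rev] using hg a.rev a'.rev (Fin.rev_lt_rev.mpr h)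
  · simpa only [Fin.val_rev_eq_sub, Fin.rev_rev] using hg i.rev j.rev (Fin.rev_lt_rev.mpr h)

lemma mem_GammaH_iff_sub_mem_JA_pair {g : Fin (n + 1) → MvPolynomial (Fin n) ℤ} :
    g ∈ GammaH n χ ↔ ∀ a a' : Fin (n + 1), a < a' → g a.rev - g a'.rev ∈ JA n χ {a, a'} := by
  simp +contextual only [mem_GammaH_iff, JA_pair, Ideal.mem_span_singleton]

lemma mk_JA_rev_eq_of_mem_GammaH {g : Fin (n + 1) → MvPolynomial (Fin n) ℤ}
    (hg : g ∈ GammaH n χ) {A : Finset (Fin (n + 1))} {a a' : Fin (n + 1)}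
    (ha : a ∈ A) (ha' : a' ∈ A) :
    Ideal.Quotient.mk (JA n χ A) (g a.rev) = Ideal.Quotient.mk (JA n χ A) (g a'.rev) := by
  wlog h : a < a' generalizing a a'
  · rcases (not_lt.mp h).eq_or_lt with rfl | h'
    · rfl
    · exact (this ha' ha h').symm
  have hpair : ({a, a'} : Finset (Fin (n + 1))) ⊆ A := Finset.insert_subset ha (by simpa)
  exact Ideal.Quotient.eq.mpr
    (JA_mono n χ hpair ((mem_GammaH_iff_sub_mem_JA_pair n χ).mp hg a a' h))

lemma mk_JA_eq_of_mem_PHring {f : Π A : NESet n, MvPolynomial (Fin n) ℤ ⧸ JA n χ A.1}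
    (hf : f ∈ PHring n χ) {r : Fin (n + 1) → MvPolynomial (Fin n) ℤ}
    (hr : ∀ a, Ideal.Quotient.mk (JA n χ {a}) (r a) = f ⟨{a}, Finset.singleton_nonempty a⟩)
    {A : NESet n} {a : Fin (n + 1)} (ha : a ∈ A.1) :
    Ideal.Quotient.mk (JA n χ A.1) (r a) = f A := by
  rw [← hf ⟨{a}, Finset.singleton_nonempty a⟩ A (Finset.singleton_subset_iff.mpr ha), ← hr,
    Ideal.Quotient.factor_mk]

def toPHring : GammaH n χ →+* PHring n χ :=
  (RingHom.pi fun A : NESet n => (Ideal.Quotient.mk (JA n χ A.1)).comp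
    ((Pi.evalRingHom _ (A.1.min' A.2).rev).comp (GammaH n χ).subtype)).codRestrict _
    fun g A A' h =>
      (Ideal.Quotient.factor_mk _ _).trans
        (mk_JA_rev_eq_of_mem_GammaH n χ g.2 (h (A.1.min'_mem A.2)) (A'.1.min'_mem A'.2))

lemma toPHring_apply (g : GammaH n χ) (A : NESet n) :
    (toPHring n χ g).1 A = Ideal.Quotient.mk (JA n χ A.1) (g.1 (A.1.min' A.2).rev) :=
  rfl

lemma toPHring_injective : Function.Injective (toPHring n χ) := by
  intro g g' h
  ext i : 2
  have hi := congrArg (fun f : PHring n χ => f.1 ⟨{i.rev}, Finset.singleton_nonempty _⟩) h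
  simpa [toPHring_apply, JA_singleton, sub_eq_zero] using Ideal.Quotient.eq.mp hi

lemma toPHring_surjective : Function.Surjective (toPHring n χ) := by
  intro f
  choose r hr using fun a : Fin (n + 1) =>
    Ideal.Quotient.mk_surjective (f.1 ⟨{a}, Finset.singleton_nonempty a⟩)
  have hmk {A : NESet n} {a : Fin (n + 1)} (ha : a ∈ A.1) :=
    mk_JA_eq_of_mem_PHring n χ f.2 hr ha
  have hg : (fun i => r i.rev) ∈ GammaH n χ := by
    refine (mem_GammaH_iff_sub_mem_JA_pair n χ).mpr fun a a' _ => Ideal.Quotient.eq.mp ?_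
    simp only [Fin.rev_rev]
    exact (hmk (A := ⟨{a, a'}, Finset.insert_nonempty _ _⟩) (by simp)).trans
      (hmk (by simp)).symm
  refine ⟨⟨_, hg⟩, Subtype.ext (funext fun A => ?_)⟩
  simpa [toPHring_apply, Fin.rev_rev] using hmk (A.1.min'_mem A.2)

end Fan

theorem gamma_iso_piecewise_polynomials_general (n : ℕ) (χ : Fin (n + 1) → ℕ) :
    (∀ g ∈ GammaH n χ, ∀ A : Finset (Fin (n + 1)), A.Nonempty →
      ∀ a ∈ A, ∀ a' ∈ A,
        Ideal.Quotient.mk (JA n χ A)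
            (g ⟨n - (a : ℕ), Nat.lt_succ_of_le (Nat.sub_le n _)⟩) =
          Ideal.Quotient.mk (JA n χ A)
            (g ⟨n - (a' : ℕ), Nat.lt_succ_of_le (Nat.sub_le n _)⟩)) ∧
    ∃ φ : GammaH n χ ≃+* PHring n χ,
      ∀ (g : GammaH n χ) (A : NESet n),
        (φ g).1 A = Ideal.Quotient.mk (JA n χ A.1)
          (g.1 ⟨n - (A.1.min' A.2 : ℕ), Nat.lt_succ_of_le (Nat.sub_le n _)⟩) := by
  simp only [Fin.mk_sub_eq_rev]
  refine ⟨fun g hg A _ a ha a' ha' => mk_JA_rev_eq_of_mem_GammaH n χ hg ha ha', ?_⟩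
  exact ⟨RingEquiv.ofBijective (toPHring n χ) ⟨toPHring_injective n χ, toPHring_surjective n χ⟩,
    toPHring_apply n χ⟩

/-- **Algebraic core of Theorem 5.2(3), integral coefficients.**
For a normalized divisive weight vector `χ`, the map sending `g ∈ Γ` to the family
whose component at a nonempty `A ⊆ {0,…,n}` is the class of `g_{n − min A}` in
`ℤ[x]/J_A` is well defined (`g_{n−a} ≡ g_{n−a′}` mod `J_A` for all `a, a′ ∈ A`) and is
a ring isomorphism from `Γ` onto the ring `P_H(x;Σ_χ)` of integral piecewise
polynomials on `Σ_χ`. -/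
theorem gamma_iso_piecewise_polynomials (n : ℕ) (χ : Fin (n + 1) → ℕ)
    (hpos : ∀ j, 0 < χ j)
    (hdiv : ∀ j : Fin n, χ j.castSucc ∣ χ j.succ)
    (hnorm : ∀ j : Fin (n + 1), Finset.gcd (Finset.univ.erase j) χ = 1) :
    (∀ g ∈ GammaH n χ, ∀ A : Finset (Fin (n + 1)), A.Nonempty →
      ∀ a ∈ A, ∀ a' ∈ A,
        Ideal.Quotient.mk (JA n χ A)
            (g ⟨n - (a : ℕ), Nat.lt_succ_of_le (Nat.sub_le n _)⟩) =
          Ideal.Quotient.mk (JA n χ A)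
            (g ⟨n - (a' : ℕ), Nat.lt_succ_of_le (Nat.sub_le n _)⟩)) ∧
    ∃ φ : GammaH n χ ≃+* PHring n χ,
      ∀ (g : GammaH n χ) (A : NESet n),
        (φ g).1 A = Ideal.Quotient.mk (JA n χ A.1)
          (g.1 ⟨n - (A.1.min' A.2 : ℕ), Nat.lt_succ_of_le (Nat.sub_le n _)⟩) :=
  gamma_iso_piecewise_polynomials_general n χ
end
end

section
/- (Example 4.9, cohomology, module structure) The ring P_H(x) of integral piecewise polynomials on the fan Σ_{(1,1,2)} is a free module over ℤ[x_1,x_2] (acting diagonally) with basis {(1,1,1), p, q}, where p = (0, 2x_1, x_2) and q = (0, x_1(2x_1 − x_2), 0). -/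
open MvPolynomial

noncomputable section

/-- The ring of integral piecewise polynomials on the fan `Σ_{(1,1,2)}` of `ℙ(1,1,2)`:
triples `(f₀, f₁, f₂)` of polynomials in `ℤ[x₁,x₂]` (the component `fᵢ` attached to the
maximal cone `σᵢ`) with `x₁ ∣ f₀ − f₁`, `x₂ ∣ f₀ − f₂` and `(2x₁ − x₂) ∣ f₁ − f₂`.
Here `x₁ = X 0` and `x₂ = X 1` in `MvPolynomial (Fin 2) ℤ`. -/
def PH112 : Set (Fin 3 → MvPolynomial (Fin 2) ℤ) :=
  {f | X 0 ∣ f 0 - f 1 ∧ X 1 ∣ f 0 - f 2 ∧ (2 * X 0 - X 1) ∣ f 1 - f 2}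

/-- The piecewise polynomial `p = (0, 2x₁, x₂)`. -/
def pElt : Fin 3 → MvPolynomial (Fin 2) ℤ := ![0, 2 * X 0, X 1]

/-- The piecewise polynomial `q = (0, x₁(2x₁ − x₂), 0)`. -/
def qElt : Fin 3 → MvPolynomial (Fin 2) ℤ := ![0, X 0 * (2 * X 0 - X 1), 0]

/-!
Write `f₀ − f₁ = x u`, `f₀ − f₂ = y g` and `f₁ − f₂ = (2x − y) v`. Then
`(2x − y)(v + g) = x (2g − u)`, and since `x` is prime and does not divide `2x − y`, it divides
`v + g = x w`; the triple is `f₀·1 − g·p + w·q`. For uniqueness, the components `0`, `2`, `1`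
determine `a`, then `b` (cancelling `y ≠ 0`), then `c` (cancelling `x(2x − y) ≠ 0`).
-/

section Decomposition

variable {A : Type*} [CommRing A] {x y : A}

def basisComb (x y : A) (abc : A × A × A) : Fin 3 → A :=
  fun k => abc.1 + abc.2.1 * ![0, 2 * x, y] k + abc.2.2 * ![0, x * (2 * x - y), 0] k

theorem not_dvd_two_mul_sub (hxy : ¬ x ∣ y) : ¬ x ∣ 2 * x - y :=
  fun h => hxy ((dvd_sub_right (dvd_mul_left x 2)).mp h)

theorem exists_basisComb_eq (hx : Prime x) (hxy : ¬ x ∣ y) {f : Fin 3 → A}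
    (h01 : x ∣ f 0 - f 1) (h02 : y ∣ f 0 - f 2) (h12 : 2 * x - y ∣ f 1 - f 2) :
    ∃ abc, f = basisComb x y abc := by
  obtain ⟨u, hu⟩ := h01
  obtain ⟨g, hg⟩ := h02
  obtain ⟨v, hv⟩ := h12
  have hdvd : x ∣ (2 * x - y) * (v + g) := ⟨2 * g - u, by linear_combination -hv + hg - hu⟩
  obtain ⟨w, hw⟩ := (hx.dvd_or_dvd hdvd).resolve_left (not_dvd_two_mul_sub hxy)
  refine ⟨(f 0, -g, w), funext fun k => ?_⟩
  fin_cases k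
  · simp [basisComb]
  · show f 1 = f 0 + -g * (2 * x) + w * (x * (2 * x - y))
    linear_combination hv - hg + (2 * x - y) * hw
  · show f 2 = f 0 + -g * y + w * 0
    linear_combination -hg

theorem basisComb_injective [IsDomain A] (hx : Prime x) (hxy : ¬ x ∣ y) :
    Function.Injective (basisComb x y) := by
  rintro ⟨a, b, c⟩ ⟨a', b', c'⟩ h
  have hy : y ≠ 0 := by rintro rfl; exact hxy (dvd_zero x)
  have hq : x * (2 * x - y) ≠ 0 :=
    mul_ne_zero hx.ne_zero fun h => not_dvd_two_mul_sub hxy (h ▸ dvd_zero x)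
  have h0 := congrFun h 0
  have h1 := congrFun h 1
  have h2 := congrFun h 2
  simp only [basisComb, Matrix.cons_val_zero, Matrix.cons_val_one, Matrix.cons_val_two,
    Matrix.tail_cons, Matrix.head_cons, mul_zero, add_zero] at h0 h1 h2
  subst h0
  obtain rfl : b = b' := mul_right_cancel₀ hy (add_left_cancel h2)
  obtain rfl : c = c' := mul_right_cancel₀ hq (add_left_cancel h1)
  rfl

end Decomposition

theorem pElt_mem_PH112 : pElt ∈ PH112 :=
  ⟨⟨-2, by simp [pElt]; ring⟩, ⟨-1, by simp [pElt]⟩, ⟨1, by simp [pElt]⟩⟩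

theorem qElt_mem_PH112 : qElt ∈ PH112 :=
  ⟨⟨-(2 * X 0 - X 1), by simp [qElt]; ring⟩, ⟨0, by simp [qElt]⟩, ⟨X 0, by simp [qElt]; ring⟩⟩

theorem const_mem_PH112 (a : MvPolynomial (Fin 2) ℤ) : (fun _ => a) ∈ PH112 := by
  simp [PH112]

/-- **Example 4.9, cohomology, module structure.**
`P_H(x)` for `Σ_{(1,1,2)}` is a free module over `ℤ[x₁,x₂]` (acting diagonally) with
basis `{1, p, q}`: the diagonal constants, `p` and `q` lie in `P_H(x)`, and every
`f ∈ P_H(x)` is uniquely `a·1 + b·p + c·q` with `a, b, c ∈ ℤ[x₁,x₂]`. -/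
theorem PH112_free_module :
    pElt ∈ PH112 ∧ qElt ∈ PH112 ∧
    (∀ a : MvPolynomial (Fin 2) ℤ, (fun _ => a : Fin 3 → MvPolynomial (Fin 2) ℤ) ∈ PH112) ∧
    ∀ f ∈ PH112,
      ∃! abc : MvPolynomial (Fin 2) ℤ × MvPolynomial (Fin 2) ℤ × MvPolynomial (Fin 2) ℤ,
        f = fun k => abc.1 + abc.2.1 * pElt k + abc.2.2 * qElt k := by
  have hx : Prime (X 0 : MvPolynomial (Fin 2) ℤ) := X_prime
  have hxy : ¬ (X 0 : MvPolynomial (Fin 2) ℤ) ∣ X 1 := by simp [X_dvd_X]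
  refine ⟨pElt_mem_PH112, qElt_mem_PH112, const_mem_PH112, ?_⟩
  rintro f ⟨h01, h02, h12⟩
  obtain ⟨abc, hf⟩ := exists_basisComb_eq hx hxy h01 h02 h12
  exact ⟨abc, hf, fun abc' h => basisComb_injective hx hxy (h.symm.trans hf)⟩
end
end

section
/- (Canonical presentation of the Laurent face algebra) Let K be a finite abstract simplicial complex on the vertex set {1,…,m}. Then the ring homomorphism from the Laurent polynomial ring S^±_ℤ(β_1,…,β_m) = ℤ[β_1^{±1},…,β_m^{±1}] to the Laurent face algebra F_K[β;K], whose component at a face σ sends β_j to β_j for j ∈ σ and to 1 for j ∉ σ, is surjective with kernel the ideal generated by the elements (1−β)_ω = ∏_{j∈ω}(1−β_j) for all non-faces ω ∉ K; hence there is a canonical isomorphism S^±_ℤ(β_1,…,β_m)/((1−β)_ω : ω ∉ K) ≅ F_K[β;K] of graded S^±_ℤ(β)-algebras. -/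
noncomputable section

/-- The Laurent polynomial ring `S^±_ℤ(β₁,…,β_m) = ℤ[β₁^{±1},…,β_m^{±1}]`, realised
as the group algebra of `ℤ^m` over `ℤ`; the monomial `β^v` is
`AddMonoidAlgebra.single v 1`. -/
abbrev LaurentB (m : ℕ) := AddMonoidAlgebra ℤ (Fin m → ℤ)

/-- Projection of an exponent vector onto the coordinates in `σ`. -/
def projExp (m : ℕ) (σ : Finset (Fin m)) : (Fin m → ℤ) →+ (Fin m → ℤ) where
  toFun v := fun j => if j ∈ σ then v j else 0
  map_zero' := by funext j; simp
  map_add' := by intro v w; funext j; by_cases h : j ∈ σ <;> simp [h]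

/-- The ring homomorphism `S^±_ℤ(β₁,…,β_m) → S^±_ℤ(β₁,…,β_m)` sending `β_j ↦ β_j` for
`j ∈ σ` and `β_j ↦ 1` for `j ∉ σ`; its image is the Laurent polynomial ring
`S^±(β(σ))` on the variables `β_j` with `j ∈ σ`. -/
def projR (m : ℕ) (σ : Finset (Fin m)) : LaurentB m →+* LaurentB m :=
  AddMonoidAlgebra.mapDomainRingHom ℤ (projExp m σ)

/-! Expanding each monomial as `β^v = ∏_j ((β_j^{v_j} - 1) + 1) = ∑_ω ∏_{j ∈ ω} (β_j^{v_j} - 1)`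
splits every Laurent polynomial as `x = ∑_ω x_ω`. Setting the variables outside `σ` to `1` kills
`x_ω` when `ω ⊄ σ` and fixes it when `ω ⊆ σ`, and `x_ω` only depends on the image of `x` under
`β_j ↦ 1` for `j ∉ ω`. Hence the component of `x` at `σ` is `∑_{ω ⊆ σ} x_ω`; a compatible family
`(f_σ)` is the image of `∑_{ω ∈ K} (f_ω)_ω`; and `x` lies in the kernel iff `x_ω = 0` for every
face `ω`, i.e. `x = ∑_{ω ∉ K} x_ω`, where each `x_ω` is divisible by `(1 - β)_ω` because
`1 - β_j` divides `β_j^n - 1` for every `n ∈ ℤ`. -/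

open Finset

namespace AddMonoidAlgebra

variable {R G : Type*} [CommRing R] [AddCommGroup G]

theorem one_sub_single_dvd_single_zsmul_sub_one (g : G) (n : ℤ) :
    (1 - single g (1 : R)) ∣ (single (n • g) 1 - 1) := by
  rw [← neg_sub, neg_dvd]
  induction n using Int.induction_on with
  | zero => simp [one_def]
  | succ n ih =>
    have h : single (((n : ℤ) + 1) • g) (1 : R) - 1 =
        single ((n : ℤ) • g) 1 * (single g 1 - 1) + (single ((n : ℤ) • g) 1 - 1) := by
      rw [mul_sub, single_mul_single, add_smul, one_smul, mul_one, mul_one]; ring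
    rw [h]
    exact dvd_add (dvd_mul_left _ _) ih
  | pred n ih =>
    have h : single ((-(n : ℤ) - 1) • g) (1 : R) - 1 =
        single ((-(n : ℤ) - 1) • g) 1 * (1 - single g 1) + (single (-(n : ℤ) • g) 1 - 1) := by
      rw [mul_sub, single_mul_single, sub_smul, one_smul, sub_add_cancel, mul_one, mul_one]; ring
    rw [h, ← neg_sub (single g 1)]
    exact dvd_add (dvd_mul_of_dvd_right (dvd_neg.2 dvd_rfl) _) ih

end AddMonoidAlgebra

namespace LaurentFaceAlgebra

open AddMonoidAlgebra

variable {m : ℕ}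

theorem projExp_apply (σ : Finset (Fin m)) (v : Fin m → ℤ) (j : Fin m) :
    projExp m σ v j = if j ∈ σ then v j else 0 := rfl

theorem projExp_projExp (σ τ : Finset (Fin m)) (v : Fin m → ℤ) :
    projExp m σ (projExp m τ v) = projExp m (σ ∩ τ) v := by
  funext j
  simp only [projExp_apply, mem_inter, ite_and]

theorem projExp_eq_self {σ : Finset (Fin m)} {v : Fin m → ℤ} (h : ∀ j, v j ≠ 0 → j ∈ σ) :
    projExp m σ v = v := by
  funext j
  rw [projExp_apply, ite_eq_left_iff]
  exact fun hj => (not_imp_comm.1 (h j) hj).symm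

theorem projExp_single_of_mem {σ : Finset (Fin m)} {j : Fin m} (hj : j ∈ σ) (n : ℤ) :
    projExp m σ (Pi.single j n) = Pi.single j n :=
  projExp_eq_self fun k hk => by
    obtain rfl : k = j := by by_contra hkj; exact hk (Pi.single_eq_of_ne hkj (M := fun _ => ℤ) n)
    exact hj

theorem projExp_single_of_notMem {σ : Finset (Fin m)} {j : Fin m} (hj : j ∉ σ) (n : ℤ) :
    projExp m σ (Pi.single j n) = 0 := by
  funext k
  rw [projExp_apply]
  split_ifs with hk
  · exact Pi.single_eq_of_ne (ne_of_mem_of_not_mem hk hj) (M := fun _ => ℤ) n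
  · rfl

theorem coeff_projR (σ : Finset (Fin m)) (x : LaurentB m) :
    (projR m σ x).coeff = Finsupp.mapDomain (projExp m σ) x.coeff := rfl

theorem projR_single (σ : Finset (Fin m)) (v : Fin m → ℤ) (c : ℤ) :
    projR m σ (single v c) = single (projExp m σ v) c :=
  mapDomain_single

theorem projR_projR (σ τ : Finset (Fin m)) (x : LaurentB m) :
    projR m σ (projR m τ x) = projR m (σ ∩ τ) x := by
  apply coeff_injective
  rw [coeff_projR, coeff_projR, coeff_projR, ← Finsupp.mapDomain_comp]
  exact congrArg (Finsupp.mapDomain · x.coeff) (funext (projExp_projExp σ τ))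

/-- `y` lies in the Laurent polynomial ring `S^±(β(σ))` on the variables `β_j`, `j ∈ σ`. -/
def SupportedOn (σ : Finset (Fin m)) (y : LaurentB m) : Prop :=
  ∀ v ∈ y.coeff.support, ∀ j, v j ≠ 0 → j ∈ σ

theorem supportedOn_projR (σ : Finset (Fin m)) (x : LaurentB m) :
    SupportedOn σ (projR m σ x) := by
  classical
  intro v hv j hj
  rw [coeff_projR] at hv
  obtain ⟨w, -, rfl⟩ := mem_image.1 (Finsupp.mapDomain_support hv)
  by_contra hjσ
  exact hj (by rw [projExp_apply, if_neg hjσ])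

theorem projR_eq_self {σ : Finset (Fin m)} {y : LaurentB m} (h : SupportedOn σ y) :
    projR m σ y = y := by
  apply coeff_injective
  rw [coeff_projR]
  conv_rhs => rw [← Finsupp.mapDomain_id (v := y.coeff)]
  exact Finsupp.mapDomain_congr fun v hv => projExp_eq_self (h v hv)

theorem projR_single_of_notMem {σ : Finset (Fin m)} {j : Fin m} (hj : j ∉ σ) (n : ℤ) :
    projR m σ (single (Pi.single j n) 1) = 1 := by
  rw [projR_single, projExp_single_of_notMem hj, one_def]

def monomialPart (ω : Finset (Fin m)) (v : Fin m → ℤ) : LaurentB m :=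
  ∏ j ∈ ω, (single (Pi.single j (v j)) 1 - 1)

theorem sum_monomialPart (v : Fin m → ℤ) : ∑ ω, monomialPart ω v = single v 1 := by
  calc ∑ ω, monomialPart ω v
      = ∏ j, ((single (Pi.single j (v j)) 1 - 1) + 1 : LaurentB m) := by
        rw [prod_add_one, powerset_univ]
        simp only [monomialPart]
    _ = single v 1 := by
        simp only [sub_add_cancel, prod_single, prod_const_one, univ_sum_single]

theorem monomialPart_projExp {ω ρ : Finset (Fin m)} (h : ω ⊆ ρ) (v : Fin m → ℤ) :
    monomialPart ω (projExp m ρ v) = monomialPart ω v :=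
  prod_congr rfl fun j hj => by rw [projExp_apply, if_pos (h hj)]

theorem projR_monomialPart (σ ω : Finset (Fin m)) (v : Fin m → ℤ) :
    projR m σ (monomialPart ω v) = if ω ⊆ σ then monomialPart ω v else 0 := by
  rw [monomialPart, map_prod]
  split_ifs with h
  · exact prod_congr rfl fun j hj => by
      rw [map_sub, map_one, projR_single, projExp_single_of_mem (h hj)]
  · obtain ⟨j, hjω, hjσ⟩ := not_subset.1 h
    exact prod_eq_zero hjω (by rw [map_sub, map_one, projR_single_of_notMem hjσ, sub_self])

def oneSubProd (ω : Finset (Fin m)) : LaurentB m :=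
  ∏ j ∈ ω, (1 - single (Pi.single j 1) 1)

theorem oneSubProd_dvd_monomialPart (ω : Finset (Fin m)) (v : Fin m → ℤ) :
    oneSubProd ω ∣ monomialPart ω v :=
  prod_dvd_prod_of_dvd _ _ fun j _ => by
    have h := one_sub_single_dvd_single_zsmul_sub_one (R := ℤ)
      (Pi.single (M := fun _ => ℤ) j 1) (v j)
    rwa [← Pi.single_smul', smul_eq_mul, mul_one] at h

theorem projR_oneSubProd {σ ω : Finset (Fin m)} (h : ¬ ω ⊆ σ) : projR m σ (oneSubProd ω) = 0 := by
  obtain ⟨j, hjω, hjσ⟩ := not_subset.1 h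
  rw [oneSubProd, map_prod]
  exact prod_eq_zero hjω (by rw [map_sub, map_one, projR_single_of_notMem hjσ, sub_self])

def facePart (ω : Finset (Fin m)) (x : LaurentB m) : LaurentB m :=
  Finsupp.linearCombination ℤ (monomialPart ω) x.coeff

theorem facePart_eq_sum (ω : Finset (Fin m)) (x : LaurentB m) :
    facePart ω x = x.coeff.sum fun v c => c • monomialPart ω v :=
  Finsupp.linearCombination_apply _ _

theorem sum_facePart (x : LaurentB m) : ∑ ω, facePart ω x = x := by
  simp only [facePart_eq_sum, ← Finsupp.sum_finsetSum_comm, ← smul_sum, sum_monomialPart,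
    smul_single, smul_eq_mul, mul_one]
  exact sum_coeff_single x

theorem facePart_projR {ω ρ : Finset (Fin m)} (h : ω ⊆ ρ) (x : LaurentB m) :
    facePart ω (projR m ρ x) = facePart ω x := by
  rw [facePart, coeff_projR, Finsupp.linearCombination_mapDomain]
  exact congrArg (Finsupp.linearCombination ℤ · x.coeff) (funext (monomialPart_projExp h))

theorem projR_facePart (σ ω : Finset (Fin m)) (x : LaurentB m) :
    projR m σ (facePart ω x) = if ω ⊆ σ then facePart ω x else 0 := by
  simp only [facePart_eq_sum, map_finsuppSum, map_zsmul, projR_monomialPart, smul_ite, smul_zero]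
  split_ifs <;> simp

theorem projR_eq_sum_facePart (σ : Finset (Fin m)) (x : LaurentB m) :
    projR m σ x = ∑ ω ∈ σ.powerset, facePart ω x := by
  conv_lhs => rw [← sum_facePart x]
  rw [map_sum]
  simp only [projR_facePart, sum_ite, sum_const_zero, add_zero]
  congr 1
  ext ω
  simp

theorem oneSubProd_dvd_facePart (ω : Finset (Fin m)) (x : LaurentB m) :
    oneSubProd ω ∣ facePart ω x := by
  rw [facePart_eq_sum]
  exact dvd_sum fun v _ => dvd_zsmul_of_dvd _ (oneSubProd_dvd_monomialPart ω v)

theorem exists_projR_eq_of_compatible (K : Finset (Finset (Fin m)))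
    (hdown : ∀ σ ∈ K, ∀ τ ⊆ σ, τ ∈ K) (f : {σ : Finset (Fin m) // σ ∈ K} → LaurentB m)
    (hsupp : ∀ σ, SupportedOn σ.1 (f σ))
    (hcompat : ∀ σ τ : {σ : Finset (Fin m) // σ ∈ K}, σ.1 ⊆ τ.1 → projR m σ.1 (f τ) = f σ) :
    ∃ x : LaurentB m, ∀ σ, projR m σ.1 x = f σ := by
  classical
  let g (ω : Finset (Fin m)) : LaurentB m := if h : ω ∈ K then f ⟨ω, h⟩ else 0
  refine ⟨∑ ω ∈ K, facePart ω (g ω), fun ⟨σ, hσ⟩ => ?_⟩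
  have hfaces : K.filter (· ⊆ σ) = σ.powerset := by
    ext ω
    simpa only [mem_filter, mem_powerset, and_iff_right_iff_imp] using hdown σ hσ ω
  have hparts : ∀ ω ∈ σ.powerset, facePart ω (g ω) = facePart ω (f ⟨σ, hσ⟩) := by
    intro ω hω
    have hωσ := mem_powerset.1 hω
    have hωK := hdown σ hσ ω hωσ
    rw [show g ω = projR m ω (f ⟨σ, hσ⟩) from (dif_pos hωK).trans
      (hcompat ⟨ω, hωK⟩ ⟨σ, hσ⟩ hωσ).symm, facePart_projR subset_rfl]
  calc projR m σ (∑ ω ∈ K, facePart ω (g ω))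
      = ∑ ω ∈ K.filter (· ⊆ σ), facePart ω (g ω) := by
        simp only [map_sum, projR_facePart, sum_filter]
    _ = ∑ ω ∈ σ.powerset, facePart ω (f ⟨σ, hσ⟩) := by rw [hfaces]; exact sum_congr rfl hparts
    _ = f ⟨σ, hσ⟩ := by rw [← projR_eq_sum_facePart, projR_eq_self (hsupp ⟨σ, hσ⟩)]

theorem forall_projR_eq_zero_iff_mem_span (K : Finset (Finset (Fin m)))
    (hdown : ∀ σ ∈ K, ∀ τ ⊆ σ, τ ∈ K) (x : LaurentB m) :
    (∀ σ ∈ K, projR m σ x = 0) ↔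
      x ∈ Ideal.span {y | ∃ ω, ω ∉ K ∧ y = oneSubProd ω} := by
  constructor
  · intro hx
    have hfaces : ∀ ω ∈ K, facePart ω x = 0 := fun ω hω => by
      rw [← facePart_projR subset_rfl, hx ω hω]
      simp [facePart]
    rw [← sum_facePart x]
    refine Ideal.sum_mem _ fun ω _ => ?_
    by_cases hω : ω ∈ K
    · rw [hfaces ω hω]
      exact zero_mem _
    · exact Ideal.mem_of_dvd _ (oneSubProd_dvd_facePart ω x) (Ideal.subset_span ⟨ω, hω, rfl⟩)
  · intro hx σ hσ
    refine (Ideal.span_le (I := RingHom.ker (projR m σ)).2 ?_) hx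
    rintro _ ⟨ω, hω, rfl⟩
    exact projR_oneSubProd fun h => hω (hdown σ hσ ω h)

end LaurentFaceAlgebra

theorem laurent_face_algebra_presentation_general (m : ℕ) (K : Finset (Finset (Fin m)))
    (hdown : ∀ σ ∈ K, ∀ τ ⊆ σ, τ ∈ K) :
    (∀ (x : LaurentB m) (σ : Finset (Fin m)),
      ∀ v ∈ (projR m σ x).coeff.support, ∀ j, v j ≠ 0 → j ∈ σ) ∧
    (∀ (x : LaurentB m) (σ τ : Finset (Fin m)), σ ⊆ τ →
      projR m σ (projR m τ x) = projR m σ x) ∧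
    (∀ f : {σ : Finset (Fin m) // σ ∈ K} → LaurentB m,
      (∀ σ, ∀ v ∈ (f σ).coeff.support, ∀ j, v j ≠ 0 → j ∈ σ.1) →
      (∀ σ τ : {σ : Finset (Fin m) // σ ∈ K}, σ.1 ⊆ τ.1 → projR m σ.1 (f τ) = f σ) →
      ∃ x : LaurentB m, ∀ σ, projR m σ.1 x = f σ) ∧
    (∀ x : LaurentB m,
      (∀ σ ∈ K, projR m σ x = 0) ↔
      x ∈ Ideal.span {y : LaurentB m | ∃ ω : Finset (Fin m), ω ∉ K ∧
        y = ∏ j ∈ ω,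
          (1 - AddMonoidAlgebra.single (fun k => if k = j then (1 : ℤ) else 0) 1)}) := by
  have hβ (j : Fin m) : (Pi.single j 1 : Fin m → ℤ) = fun k => if k = j then (1 : ℤ) else 0 :=
    funext fun k => by rw [Pi.single_apply]
  refine ⟨fun x σ => LaurentFaceAlgebra.supportedOn_projR σ x, fun x σ τ hστ => ?_,
    LaurentFaceAlgebra.exists_projR_eq_of_compatible K hdown, fun x => ?_⟩
  · rw [LaurentFaceAlgebra.projR_projR, inter_eq_left.2 hστ]
  · simpa only [LaurentFaceAlgebra.oneSubProd, hβ] using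
      LaurentFaceAlgebra.forall_projR_eq_zero_iff_mem_span K hdown x

/-- **Canonical presentation of the Laurent face algebra.**
Let `K` be a finite abstract simplicial complex on the vertex set `{1,…,m}` (a
collection of subsets of `Fin m` containing `∅` and closed under subsets).  The
Laurent face algebra `F_K[β;K]` is the subring of `∏_{σ∈K} S^±(β(σ))` of families
compatible under the maps `β_j ↦ 1` (`j ∈ τ∖σ`); concretely, its elements are the
families `f : {σ // σ ∈ K} → S^±_ℤ(β)` with each `f σ` supported on exponents living
on `σ` and `projR σ (f τ) = f σ` whenever `σ ⊆ τ`.  Then the canonical homomorphism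
`Φ : S^±_ℤ(β₁,…,β_m) → F_K[β;K]`, whose component at `σ` is `projR σ`, is:
* actually a map into `F_K[β;K]` (first two conjuncts);
* surjective onto `F_K[β;K]` (third conjunct); and
* of kernel the ideal generated by the products `(1−β)_ω = ∏_{j∈ω}(1−β_j)` over the
  non-faces `ω ∉ K` (fourth conjunct);
hence it induces a canonical isomorphism
`S^±_ℤ(β)/((1−β)_ω : ω ∉ K) ≅ F_K[β;K]` of `S^±_ℤ(β)`-algebras. -/
theorem laurent_face_algebra_presentation (m : ℕ) (K : Finset (Finset (Fin m)))
    (hempty : ∅ ∈ K) (hdown : ∀ σ ∈ K, ∀ τ ⊆ σ, τ ∈ K) :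
    (∀ (x : LaurentB m) (σ : Finset (Fin m)),
      ∀ v ∈ (projR m σ x).coeff.support, ∀ j, v j ≠ 0 → j ∈ σ) ∧
    (∀ (x : LaurentB m) (σ τ : Finset (Fin m)), σ ⊆ τ →
      projR m σ (projR m τ x) = projR m σ x) ∧
    (∀ f : {σ : Finset (Fin m) // σ ∈ K} → LaurentB m,
      (∀ σ, ∀ v ∈ (f σ).coeff.support, ∀ j, v j ≠ 0 → j ∈ σ.1) →
      (∀ σ τ : {σ : Finset (Fin m) // σ ∈ K}, σ.1 ⊆ τ.1 → projR m σ.1 (f τ) = f σ) →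
      ∃ x : LaurentB m, ∀ σ, projR m σ.1 x = f σ) ∧
    (∀ x : LaurentB m,
      (∀ σ ∈ K, projR m σ x = 0) ↔
      x ∈ Ideal.span {y : LaurentB m | ∃ ω : Finset (Fin m), ω ∉ K ∧
        y = ∏ j ∈ ω,
          (1 - AddMonoidAlgebra.single (fun k => if k = j then (1 : ℤ) else 0) 1)}) :=
  laurent_face_algebra_presentation_general m K hdown
end
end

section
/- (Proposition 7.4) Let Σ be a smooth complete simplicial fan in ℝ^n, given by ray vectors v_1,…,v_m ∈ ℤ^n and a finite abstract simplicial complex K on {1,…,m} such that for every face σ ∈ K the vectors {v_j : j ∈ σ} extend to a ℤ-basis of ℤ^n, cone(σ) ∩ cone(τ) = cone(σ ∩ τ) for all faces σ, τ, and the cones cone(σ) = {Σ_{j∈σ} c_j v_j : c_j ≥ 0} cover ℝ^n. Then for each face σ the assignment α^J ↦ ∏_{j∈σ} β_j^{⟨J, v_j⟩} (J ∈ ℤ^n) induces a well-defined ring isomorphism S^±_ℤ(α)/J_σ → ℤ[β_j^{±1} : j ∈ σ], and these assemble into a ring isomorphism ξ* from the algebra P_K(α;Σ) of integral piecewise Laurent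 polynomials on Σ onto the Laurent face algebra F_K[β;Σ], compatible with the homomorphism ξ^{tr} : S^±_ℤ(α) → S^±_ℤ(β) sending α^J to β^{ξ^{tr}J}, where ξ is the n×m integer matrix with columns v_1,…,v_m. (The paper states this for smooth polytopal fans, i.e. normal fans of Delzant polytopes, which are in particular smooth and complete.) -/
/-!
On a smooth face `σ` the pairing `J ↦ (⟨J, v_j⟩)_{j ∈ σ}` maps `ℤⁿ` onto the exponent lattice
`ℤ^σ`, and its kernel is exactly the lattice of `w` with `⟨w, v_j⟩ = 0` for `j ∈ σ`. For any
surjection of groups `θ : G → H` the kernel of `R[G] → R[H]` is generated by the `1 - [w]`,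
`w ∈ ker θ`, so `S^±_ℤ(α)/J_σ ≅ ℤ[β_j^{±1} : j ∈ σ]`. These isomorphisms commute with the
restriction maps on both sides, hence carry compatible families to compatible families.
-/

set_option synthInstance.maxHeartbeats 400000

noncomputable section

/-- The Laurent polynomial ring `S^±_ℤ(α) = ℤ[α₁^{±1},…,αₙ^{±1}]`, realised as the
group algebra of `ℤⁿ` over `ℤ`; the monomial `α^J` is `AddMonoidAlgebra.single J 1`. -/
abbrev LaurentA (n : ℕ) := AddMonoidAlgebra ℤ (Fin n → ℤ)

/-- The ideal `J_σ ⊆ S^±_ℤ(α)` generated by the Euler classes `1 − α^w` for the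
`w ∈ ℤⁿ` orthogonal to all rays `v_j` with `j ∈ σ`. -/
def Jsig (n m : ℕ) (v : Fin m → Fin n → ℤ) (σ : Finset (Fin m)) : Ideal (LaurentA n) :=
  Ideal.span {f | ∃ w : Fin n → ℤ, (∀ j ∈ σ, ∑ k, w k * v j k = 0) ∧
    f = 1 - AddMonoidAlgebra.single w 1}

lemma Jsig_anti (n m : ℕ) (v : Fin m → Fin n → ℤ) {σ τ : Finset (Fin m)} (h : σ ⊆ τ) :
    Jsig n m v τ ≤ Jsig n m v σ :=
  Ideal.span_mono (by rintro f ⟨w, hw, rfl⟩; exact ⟨w, fun j hj => hw j (h hj), rfl⟩)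

/-- The subgroup of `ℤ^m` of exponent vectors supported on `σ`. -/
def expSub (m : ℕ) (σ : Finset (Fin m)) : AddSubgroup (Fin m → ℤ) where
  carrier := {w | ∀ j ∉ σ, w j = 0}
  zero_mem' := fun j _ => rfl
  add_mem' := by intro a b ha hb j hj; simp [ha j hj, hb j hj]
  neg_mem' := by intro a ha j hj; simp [ha j hj]

/-- The Laurent polynomial ring `ℤ[β_j^{±1} : j ∈ σ]` on the variables indexed by `σ`,
realised as the group algebra of the lattice of exponent vectors supported on `σ`. -/
abbrev FSig (m : ℕ) (σ : Finset (Fin m)) := AddMonoidAlgebra ℤ ↥(expSub m σ)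

/-- Restriction of exponent vectors from `τ` to `σ`. -/
def restrExp (m : ℕ) (σ τ : Finset (Fin m)) : ↥(expSub m τ) →+ ↥(expSub m σ) where
  toFun w := ⟨fun j => if j ∈ σ then w.1 j else 0, by intro j hj; simp [hj]⟩
  map_zero' := by
    apply Subtype.ext; funext j; by_cases h : j ∈ σ <;> simp [h]
  map_add' := by
    intro a b; apply Subtype.ext; funext j; by_cases h : j ∈ σ <;> simp [h]

/-- The ring homomorphism `ℤ[β_j^{±1} : j ∈ τ] → ℤ[β_j^{±1} : j ∈ σ]` sending
`β_j ↦ β_j` for `j ∈ σ` and `β_j ↦ 1` for `j ∈ τ∖σ`. -/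
def restrR (m : ℕ) (σ τ : Finset (Fin m)) : FSig m τ →+* FSig m σ :=
  AddMonoidAlgebra.mapDomainRingHom ℤ (restrExp m σ τ)

/-- The algebra `P_K(α;Σ)` of integral piecewise Laurent polynomials on the fan `Σ`
with faces `K`: families `(f_σ)_{σ∈K}` with `f_σ ∈ S^±_ℤ(α)/J_σ`, compatible under the
projections `S^±_ℤ(α)/J_τ → S^±_ℤ(α)/J_σ` for `σ ⊆ τ`. -/
def Pring (n m : ℕ) (v : Fin m → Fin n → ℤ) (K : Finset (Finset (Fin m))) :
    Subring (Π σ : {σ : Finset (Fin m) // σ ∈ K}, LaurentA n ⧸ Jsig n m v σ.1) where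
  carrier := {f | ∀ (σ τ : {σ : Finset (Fin m) // σ ∈ K}) (h : σ.1 ⊆ τ.1),
    Ideal.Quotient.factor (Jsig_anti n m v h) (f τ) = f σ}
  zero_mem' := by intro σ τ h; simp only [Pi.zero_apply, map_zero]
  one_mem' := by intro σ τ h; simp only [Pi.one_apply, map_one]
  add_mem' := by
    intro a b ha hb σ τ h
    simp only [Pi.add_apply, map_add, ha σ τ h, hb σ τ h]
  neg_mem' := by
    intro a ha σ τ h
    simp only [Pi.neg_apply, map_neg, ha σ τ h]
  mul_mem' := by
    intro a b ha hb σ τ h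
    simp only [Pi.mul_apply, map_mul, ha σ τ h, hb σ τ h]

/-- The Laurent face algebra `F_K[β;Σ]`: families `(f_σ)_{σ∈K}` with
`f_σ ∈ ℤ[β_j^{±1} : j ∈ σ]`, compatible under the maps `β_j ↦ 1` (`j ∈ τ∖σ`). -/
def Fring (m : ℕ) (K : Finset (Finset (Fin m))) :
    Subring (Π σ : {σ : Finset (Fin m) // σ ∈ K}, FSig m σ.1) where
  carrier := {f | ∀ σ τ : {σ : Finset (Fin m) // σ ∈ K}, σ.1 ⊆ τ.1 →
    restrR m σ.1 τ.1 (f τ) = f σ}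
  zero_mem' := by intro σ τ h; simp only [Pi.zero_apply, map_zero]
  one_mem' := by intro σ τ h; simp only [Pi.one_apply, map_one]
  add_mem' := by
    intro a b ha hb σ τ h
    simp only [Pi.add_apply, map_add, ha σ τ h, hb σ τ h]
  neg_mem' := by
    intro a ha σ τ h
    simp only [Pi.neg_apply, map_neg, ha σ τ h]
  mul_mem' := by
    intro a b ha hb σ τ h
    simp only [Pi.mul_apply, map_mul, ha σ τ h, hb σ τ h]

/-- The cone of the fan spanned by the rays `v_j` with `j ∈ σ`: all nonnegative real
linear combinations of those rays. -/
def coneR (n m : ℕ) (v : Fin m → Fin n → ℤ) (σ : Finset (Fin m)) : Set (Fin n → ℝ) :=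
  {x | ∃ c : Fin m → ℝ, (∀ j, 0 ≤ c j) ∧ (∀ j ∉ σ, c j = 0) ∧
    ∀ k, x k = ∑ j, c j * ((v j k : ℤ) : ℝ)}

namespace AddMonoidAlgebra

variable {R G H : Type*} [CommRing R] [AddCommGroup G] [AddCommGroup H] (θ : G →+ H)

theorem single_sub_single_mem_span_one_sub_single {g g' : G} (h : θ g = θ g') (r : R) :
    single g r - single g' r ∈
      Ideal.span {f : AddMonoidAlgebra R G | ∃ w, θ w = 0 ∧ f = 1 - single w 1} := by
  have hgen : (1 : AddMonoidAlgebra R G) - single (g - g') 1 ∈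
      Ideal.span {f : AddMonoidAlgebra R G | ∃ w, θ w = 0 ∧ f = 1 - single w 1} :=
    Ideal.subset_span ⟨g - g', by rw [map_sub, h, sub_self], rfl⟩
  have hfactor : single g r - single g' r =
      -(single g' r * (1 - single (g - g') 1) : AddMonoidAlgebra R G) := by
    rw [mul_sub, mul_one, single_mul_single, mul_one, add_sub_cancel, neg_sub]
  rw [hfactor]
  exact neg_mem (Ideal.mul_mem_left _ _ hgen)

theorem mapDomainRingHom_surjective (hθ : Function.Surjective θ) :
    Function.Surjective (mapDomainRingHom R θ) := by
  intro y
  induction y using AddMonoidAlgebra.induction_linear with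
  | zero => exact ⟨0, map_zero _⟩
  | add x y hx hy =>
    obtain ⟨a, rfl⟩ := hx
    obtain ⟨b, rfl⟩ := hy
    exact ⟨a + b, map_add _ _ _⟩
  | single h r =>
    obtain ⟨g, rfl⟩ := hθ h
    exact ⟨single g r, by simp⟩

theorem ker_mapDomainRingHom_of_surjective (hθ : Function.Surjective θ) :
    RingHom.ker (mapDomainRingHom R θ) =
      Ideal.span {f : AddMonoidAlgebra R G | ∃ w, θ w = 0 ∧ f = 1 - single w 1} := by
  set I := Ideal.span {f : AddMonoidAlgebra R G | ∃ w, θ w = 0 ∧ f = 1 - single w 1}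
  refine le_antisymm (fun x hx => ?_) ?_
  · -- transport along a set-theoretic section `s` of `θ` changes `y` only modulo `I`,
    -- and it sends `x ∈ ker` to `0`
    set s := Function.surjInv hθ
    have hsection : ∀ y, y - mapDomain s (mapDomainRingHom R θ y) ∈ I := by
      intro y
      induction y using AddMonoidAlgebra.induction_linear with
      | zero => simp
      | add a b ha hb =>
        rw [map_add, mapDomain_add, add_sub_add_comm]
        exact add_mem ha hb
      | single g r =>
        simpa using single_sub_single_mem_span_one_sub_single θ
          (Function.surjInv_eq hθ (θ g)).symm r
    simpa [RingHom.mem_ker.mp hx] using hsection x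
  · rw [Ideal.span_le]
    rintro _ ⟨w, hw, rfl⟩
    rw [SetLike.mem_coe, RingHom.mem_ker, map_sub, map_one, mapDomainRingHom_apply,
      mapDomain_single, hw, one_def, sub_self]

end AddMonoidAlgebra

open AddMonoidAlgebra

section Fan

variable {n m : ℕ} (v : Fin m → Fin n → ℤ)

/-- The exponent map of `α^J ↦ ∏_{j∈σ} β_j^{⟨J, v_j⟩}`. -/
def facePairing (σ : Finset (Fin m)) : (Fin n → ℤ) →+ ↥(expSub m σ) where
  toFun J := ⟨fun j => if j ∈ σ then ∑ k, J k * v j k else 0, by intro j hj; simp [hj]⟩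
  map_zero' := by ext j; simp
  map_add' a b := by
    ext j
    by_cases hj : j ∈ σ <;> simp [hj, add_mul, Finset.sum_add_distrib]

theorem facePairing_eq_zero_iff {σ : Finset (Fin m)} {w : Fin n → ℤ} :
    facePairing v σ w = 0 ↔ ∀ j ∈ σ, ∑ k, w k * v j k = 0 := by
  simp only [Subtype.ext_iff, funext_iff]
  refine forall_congr' fun j => ?_
  by_cases hj : j ∈ σ <;> simp [facePairing, hj]

theorem facePairing_surjective {σ : Finset (Fin m)} {w : Fin n → Fin n → ℤ}
    {g : {j : Fin m // j ∈ σ} → Fin n} (hg : Function.Injective g)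
    (hw : ∀ j, w (g j) = v j.1) (hdet : IsUnit (Matrix.of w).det) :
    Function.Surjective (facePairing v σ) := by
  intro b
  -- `c` puts `b_j` in the coordinate `g j`, the row of `w` holding `v_j`; then `J = w⁻¹ c`
  set c : Fin n → ℤ := Function.extend g (fun j => b.1 j.1) 0
  refine ⟨(Matrix.of w)⁻¹.mulVec c, Subtype.ext (funext fun j => ?_)⟩
  by_cases hj : j ∈ σ
  · have hrow : (Matrix.of w).mulVec ((Matrix.of w)⁻¹.mulVec c) = c := by
      rw [Matrix.mulVec_mulVec, Matrix.mul_nonsing_inv _ hdet, Matrix.one_mulVec]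
    have hc : c (g ⟨j, hj⟩) = b.1 j := hg.extend_apply _ _ _
    simp only [facePairing, AddMonoidHom.coe_mk, ZeroHom.coe_mk, if_pos hj]
    rw [← hc, ← congrFun hrow (g ⟨j, hj⟩), Matrix.mulVec, dotProduct]
    exact Finset.sum_congr rfl fun k _ => by rw [Matrix.of_apply, hw, mul_comm]
  · simp [facePairing, hj, b.2 j hj]

theorem Jsig_eq_ker_facePairing {σ : Finset (Fin m)}
    (hsurj : Function.Surjective (facePairing v σ)) :
    Jsig n m v σ = RingHom.ker (mapDomainRingHom ℤ (facePairing v σ)) := by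
  rw [ker_mapDomainRingHom_of_surjective _ hsurj, Jsig]
  simp only [facePairing_eq_zero_iff]

theorem restrExp_comp_facePairing {σ τ : Finset (Fin m)} (h : σ ⊆ τ) :
    (restrExp m σ τ).comp (facePairing v τ) = facePairing v σ := by
  ext J j
  by_cases hj : j ∈ σ
  · simp [restrExp, facePairing, hj, h hj]
  · simp [restrExp, facePairing, hj]

def faceQuotientEquiv {σ : Finset (Fin m)} (hsurj : Function.Surjective (facePairing v σ)) :
    (LaurentA n ⧸ Jsig n m v σ) ≃+* FSig m σ :=
  (Ideal.quotEquivOfEq (Jsig_eq_ker_facePairing v hsurj)).trans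
    (RingHom.quotientKerEquivOfSurjective (mapDomainRingHom_surjective _ hsurj))

theorem faceQuotientEquiv_mk {σ : Finset (Fin m)}
    (hsurj : Function.Surjective (facePairing v σ)) (a : LaurentA n) :
    faceQuotientEquiv v hsurj (Ideal.Quotient.mk _ a) = mapDomainRingHom ℤ (facePairing v σ) a :=
  rfl

theorem restrR_faceQuotientEquiv {σ τ : Finset (Fin m)} (h : σ ⊆ τ)
    (hσ : Function.Surjective (facePairing v σ)) (hτ : Function.Surjective (facePairing v τ))
    (x : LaurentA n ⧸ Jsig n m v τ) :
    restrR m σ τ (faceQuotientEquiv v hτ x) =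
      faceQuotientEquiv v hσ (Ideal.Quotient.factor (Jsig_anti n m v h) x) := by
  obtain ⟨a, rfl⟩ := Ideal.Quotient.mk_surjective x
  rw [Ideal.Quotient.factor_mk, faceQuotientEquiv_mk, faceQuotientEquiv_mk, restrR,
    ← RingHom.comp_apply, ← mapDomainRingHom_comp, restrExp_comp_facePairing v h]

end Fan

theorem Pring_map_piCongrRight {n m : ℕ} {v : Fin m → Fin n → ℤ} {K : Finset (Finset (Fin m))}
    (e : ∀ σ : {σ : Finset (Fin m) // σ ∈ K}, (LaurentA n ⧸ Jsig n m v σ.1) ≃+* FSig m σ.1)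
    (he : ∀ (σ τ : {σ : Finset (Fin m) // σ ∈ K}) (h : σ.1 ⊆ τ.1) x,
      restrR m σ.1 τ.1 (e τ x) = e σ (Ideal.Quotient.factor (Jsig_anti n m v h) x)) :
    (Pring n m v K).map (RingEquiv.piCongrRight e).toRingHom = Fring m K := by
  ext q
  refine (Subring.mem_map_equiv (f := RingEquiv.piCongrRight e)).trans ?_
  refine forall_congr' fun σ => forall_congr' fun τ => forall_congr' fun h => ?_
  change Ideal.Quotient.factor _ ((e τ).symm (q τ)) = (e σ).symm (q σ) ↔ _
  rw [RingEquiv.eq_symm_apply, ← he σ τ h, RingEquiv.apply_symm_apply]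

/-- **Proposition 7.4.**
Let `Σ` be a smooth complete simplicial fan in `ℝⁿ`, encoded by ray vectors
`v₁,…,v_m ∈ ℤⁿ` and a finite abstract simplicial complex `K` on `{1,…,m}` such that
for every face `σ ∈ K` the vectors `{v_j : j ∈ σ}` extend to a `ℤ`-basis of `ℤⁿ`,
`cone(σ) ∩ cone(τ) = cone(σ ∩ τ)` for all faces, and the cones cover `ℝⁿ`.  Then for
each face `σ` the assignment `α^J ↦ ∏_{j∈σ} β_j^{⟨J,v_j⟩}` induces a well-defined ring
isomorphism `S^±_ℤ(α)/J_σ → ℤ[β_j^{±1} : j ∈ σ]`, and these assemble into a ring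
isomorphism `ξ*` from the algebra `P_K(α;Σ)` of integral piecewise Laurent polynomials
on `Σ` onto the Laurent face algebra `F_K[β;Σ]` (compatibly with
`ξ^{tr} : S^±_ℤ(α) → S^±_ℤ(β)`, `α^J ↦ β^{ξ^{tr}J}`, where `ξ` is the matrix with
columns the `v_j`). -/
theorem piecewise_laurent_iso_face_algebra (n m : ℕ)
    (v : Fin m → Fin n → ℤ) (K : Finset (Finset (Fin m)))
    (hsmooth : ∀ σ ∈ K, ∃ (w : Fin n → Fin n → ℤ) (g : {j : Fin m // j ∈ σ} → Fin n),
      Function.Injective g ∧ (∀ j, w (g j) = v j.1) ∧ IsUnit (Matrix.of w).det) :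
    ∃ e : ∀ σ : {σ : Finset (Fin m) // σ ∈ K},
        (LaurentA n ⧸ Jsig n m v σ.1) ≃+* FSig m σ.1,
      (∀ (σ : {σ : Finset (Fin m) // σ ∈ K}) (J : Fin n → ℤ),
        e σ (Ideal.Quotient.mk (Jsig n m v σ.1) (AddMonoidAlgebra.single J 1)) =
          AddMonoidAlgebra.single
            (⟨fun j => if j ∈ σ.1 then ∑ k, J k * v j k else 0,
              by intro j hj; simp [hj]⟩ : ↥(expSub m σ.1)) 1) ∧
      ∃ Ξ : Pring n m v K ≃+* Fring m K,
        ∀ (p : Pring n m v K) (σ : {σ : Finset (Fin m) // σ ∈ K}),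
          (Ξ p).1 σ = e σ (p.1 σ) := by
  have hsurj (σ : {σ : Finset (Fin m) // σ ∈ K}) : Function.Surjective (facePairing v σ.1) := by
    obtain ⟨w, g, hg, hw, hdet⟩ := hsmooth σ.1 σ.2
    exact facePairing_surjective v hg hw hdet
  set e := fun σ => faceQuotientEquiv v (hsurj σ)
  have hmap := Pring_map_piCongrRight e
    fun σ τ h => restrR_faceQuotientEquiv v h (hsurj σ) (hsurj τ)
  refine ⟨e, fun σ J => ?_, ?_⟩
  · rw [faceQuotientEquiv_mk, mapDomainRingHom_apply, mapDomain_single]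
    rfl
  · exact ⟨(RingEquiv.piCongrRight e).subringMap.trans (RingEquiv.subringCongr hmap),
      fun p σ => rfl⟩
end
end
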